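/- arXiv:1903.04335 — 4 statements merged into one kernel-verified Lean document; each statement's English description precedes it below -/
import Mathlib

section
/- Let K = ⋃_{ℓ=1}^L [a_ℓ, b_ℓ] ⊆ [−1,1] with −1 = a_1 < b_1 < a_2 < ⋯ < a_L < b_L = 1, let w be continuous and strictly positive on K, and let d ≥ N. Then the map P ↦ sslash P sslash_d is a norm on the vector space of real polynomials of degree at most N; in particular it is finite, absolutely homogeneous, satisfies the triangle inequality, and sslash P sslash_d = 0 implies P = 0. -/
open MeasureTheory Filter Polynomial

/-- The `(d+1) × (d+1)` symmetric Toeplitz matrix built from a vector `y ∈ ℝ^{d+1}`,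
with entries `y_{|i−j|}`. -/
noncomputable def toepFin (d : ℕ) (y : Fin (d + 1) → ℝ) :
    Matrix (Fin (d + 1)) (Fin (d + 1)) ℝ :=
  fun i j => y ⟨(((i : ℕ) : ℤ) - ((j : ℕ) : ℤ)).natAbs, by omega⟩

/-- The transplantation `P_ℓ(x) = P(((bℓ−aℓ)x + aℓ + bℓ)/2)` of a polynomial
from `[aℓ, bℓ]` to `[-1, 1]`. -/
noncomputable def transplant (aℓ bℓ : ℝ) (P : Polynomial ℝ) : Polynomial ℝ :=
  P.comp (Polynomial.C ((bℓ - aℓ) / 2) * Polynomial.X + Polynomial.C ((aℓ + bℓ) / 2))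

/-- The entries `J^ℓ_{k,n} = ∫_0^π cos(kθ) sin((n+1)θ) / w_ℓ(cos θ) dθ`, where
`w_ℓ(x) = w(((bℓ−aℓ)x + aℓ + bℓ)/2)` is the transplantation of the weight `w`. -/
noncomputable def Jent (aℓ bℓ : ℝ) (w : ℝ → ℝ) (k n : ℕ) : ℝ :=
  ∫ θ in (0:ℝ)..Real.pi,
    Real.cos (k * θ) * Real.sin ((n + 1) * θ) /
      w (((bℓ - aℓ) * Real.cos θ + aℓ + bℓ) / 2)

/-- The weighted `L1` norm `‖P/w‖_{L1(K)} = ∑_ℓ ∫_{a_ℓ}^{b_ℓ} |P(t)|/w(t) dt`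
on `K = ⋃_{ℓ<L} [a ℓ, b ℓ]`. -/
noncomputable def L1K (L : ℕ) (a b : ℕ → ℝ) (w : ℝ → ℝ) (P : Polynomial ℝ) : ℝ :=
  ∑ ℓ ∈ Finset.range L, ∫ t in (a ℓ)..(b ℓ), |P.eval t| / w t

/-- The ersatz norm `⫽P⫽_d`: the infimum of
`∑_ℓ ((b_ℓ−a_ℓ)/2)(y^{ℓ,+}_0 + y^{ℓ,−}_0)` over vectors `y^{ℓ,±} ∈ ℝ^{d+1}` with
`y^{ℓ,+} − y^{ℓ,−} = J^{ℓ,d} W^ℓ p` and `Toep_d(y^{ℓ,±}) ⪰ 0`, where `q ℓ = W^ℓ p` is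
the vector of second-kind Chebyshev coefficients of the transplantation `P_ℓ`. -/
noncomputable def ersatz (L N d : ℕ) (a b : ℕ → ℝ) (w : ℝ → ℝ) (P : Polynomial ℝ) : ℝ :=
  sInf { s : ℝ |
    ∃ q : ℕ → Fin (N + 1) → ℝ,
      (∀ ℓ < L, transplant (a ℓ) (b ℓ) P
          = ∑ n : Fin (N + 1), Polynomial.C (q ℓ n) * Polynomial.Chebyshev.U ℝ ((n : ℕ) : ℤ)) ∧
      ∃ yp ym : ℕ → Fin (d + 1) → ℝ,
        (∀ ℓ < L, ∀ k : Fin (d + 1),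
            yp ℓ k - ym ℓ k
              = ∑ n : Fin (N + 1), Jent (a ℓ) (b ℓ) w (k : ℕ) (n : ℕ) * q ℓ n) ∧
        (∀ ℓ < L, (toepFin d (yp ℓ)).PosSemidef ∧ (toepFin d (ym ℓ)).PosSemidef) ∧
        s = ∑ ℓ ∈ Finset.range L, ((b ℓ - a ℓ) / 2) * (yp ℓ 0 + ym ℓ 0) }

/-!
Absolute homogeneity and the triangle inequality hold because the feasible values of the
infimum form a cone: feasible data for `P` and `Q` add up to feasible data for `P + Q`, scale by
`c ≥ 0`, and swapping `y⁺` and `y⁻` gives feasible data for `-P`. Feasible data exist because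
`Toep(z) + t • 1` is positive semidefinite once `t` dominates the entries of `Toep(z)`.

For definiteness, look at the first interval: the constraint says that `y⁺_k - y⁻_k` is the
`k`-th cosine moment of `sin θ P₁(cos θ) / w₁(cos θ)` on `[0, π]`. Expanding `P₁ = ∑ c_k T_k`
with `k ≤ N ≤ d` and using `T_k(cos θ) = cos kθ` gives
`0 < ∫ sin θ P₁(cos θ)² / w₁(cos θ) dθ = ∑ c_k (y⁺_k - y⁻_k) ≤ (∑ |c_k|) (y⁺_0 + y⁻_0)`,
as a positive semidefinite Toeplitz matrix satisfies `|y_k| ≤ y_0`.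
-/

open Matrix Real

lemma Matrix.PosSemidef.two_mul_abs_apply_le {n : Type*} [Fintype n] [DecidableEq n]
    {A : Matrix n n ℝ} (hA : A.PosSemidef) (i j : n) : 2 * |A i j| ≤ A i i + A j j := by
  have hsymm : A j i = A i j := by simpa using congrFun (congrFun hA.isHermitian i) j
  have hplus := hA.dotProduct_mulVec_nonneg (Pi.single i 1 + Pi.single j 1)
  have hminus := hA.dotProduct_mulVec_nonneg (Pi.single i 1 - Pi.single j 1)
  simp only [star_trivial, mulVec_add, mulVec_sub, mulVec_single_one, dotProduct_add,
    dotProduct_sub, add_dotProduct, sub_dotProduct, single_dotProduct, col_apply, one_mul,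
    hsymm] at hplus hminus
  rcases abs_cases (A i j) with ⟨h, -⟩ | ⟨h, -⟩ <;> linarith

lemma Matrix.posSemidef_add_smul_one_of_abs_apply_le {n : Type*} [Fintype n] [DecidableEq n]
    {A : Matrix n n ℝ} (hA : A.IsHermitian) {M t : ℝ} (hM : ∀ i j, |A i j| ≤ M)
    (ht : Fintype.card n * M ≤ t) : (A + t • 1).PosSemidef := by
  refine .of_dotProduct_mulVec_nonneg (hA.add (isHermitian_one.smul (.all t))) fun x => ?_
  have hentry : ∀ i j, -(M / 2 * x i ^ 2) - M / 2 * x j ^ 2 ≤ x i * (A i j * x j) := by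
    intro i j
    have h := neg_abs_le (x i * (A i j * x j))
    rw [abs_mul, abs_mul] at h
    nlinarith [hM i j, abs_nonneg (x i), abs_nonneg (x j), abs_nonneg (A i j),
      two_mul_le_add_sq |x i| |x j|, sq_abs (x i), sq_abs (x j)]
  have hdouble : ∑ i, ∑ j, (-(M / 2 * x i ^ 2) - M / 2 * x j ^ 2)
      = -(Fintype.card n * M * ∑ i, x i ^ 2) := by
    simp only [Finset.sum_sub_distrib, Finset.sum_neg_distrib, Finset.sum_const,
      Finset.card_univ, nsmul_eq_mul, ← Finset.mul_sum]
    ring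
  have hquad : -(Fintype.card n * M * ∑ i, x i ^ 2) ≤ x ⬝ᵥ (A *ᵥ x) := by
    rw [← hdouble]
    simp only [dotProduct, mulVec, Finset.mul_sum]
    exact Finset.sum_le_sum fun i _ => Finset.sum_le_sum fun j _ => hentry i j
  have hdiag : x ⬝ᵥ ((t • 1 : Matrix n n ℝ) *ᵥ x) = t * ∑ i, x i ^ 2 := by
    simp [smul_mulVec, dotProduct, Finset.mul_sum, sq, mul_left_comm]
  rw [star_trivial, add_mulVec, dotProduct_add, hdiag]
  nlinarith [Finset.sum_nonneg fun i (_ : i ∈ Finset.univ) => sq_nonneg (x i)]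

section Toeplitz

variable {d : ℕ}

lemma toepFin_apply_self (y : Fin (d + 1) → ℝ) (i : Fin (d + 1)) : toepFin d y i i = y 0 := by
  simp [toepFin]

lemma toepFin_zero_apply (y : Fin (d + 1) → ℝ) (k : Fin (d + 1)) : toepFin d y 0 k = y k := by
  simp [toepFin]

lemma toepFin_isHermitian (y : Fin (d + 1) → ℝ) : (toepFin d y).IsHermitian := by
  ext i j
  simp only [conjTranspose_apply, toepFin, star_trivial]
  congr 2
  omega

lemma toepFin_add (y z : Fin (d + 1) → ℝ) : toepFin d (y + z) = toepFin d y + toepFin d z := rfl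

lemma toepFin_smul (c : ℝ) (y : Fin (d + 1) → ℝ) : toepFin d (c • y) = c • toepFin d y := rfl

lemma toepFin_single_zero (t : ℝ) : toepFin d (Pi.single 0 t) = t • 1 := by
  ext i j
  rcases eq_or_ne i j with rfl | hij
  · simp [toepFin_apply_self]
  · have : (⟨(((i : ℕ) : ℤ) - ((j : ℕ) : ℤ)).natAbs, by omega⟩ : Fin (d + 1)) ≠ 0 := by
      simp only [ne_eq, Fin.ext_iff, Fin.val_zero]
      omega
    simp [toepFin, hij, this]

lemma abs_le_of_posSemidef_toepFin {y : Fin (d + 1) → ℝ} (h : (toepFin d y).PosSemidef)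
    (k : Fin (d + 1)) : |y k| ≤ y 0 := by
  have := h.two_mul_abs_apply_le 0 k
  rw [toepFin_zero_apply, toepFin_apply_self, toepFin_apply_self] at this
  linarith

lemma nonneg_of_posSemidef_toepFin {y : Fin (d + 1) → ℝ} (h : (toepFin d y).PosSemidef) :
    0 ≤ y 0 := by
  simpa [toepFin_apply_self] using h.diag_nonneg (i := 0)

lemma posSemidef_toepFin_add_single_zero (z : Fin (d + 1) → ℝ) {t : ℝ}
    (ht : (d + 1) * ∑ k, |z k| ≤ t) : (toepFin d (z + Pi.single 0 t)).PosSemidef := by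
  rw [toepFin_add, toepFin_single_zero]
  refine posSemidef_add_smul_one_of_abs_apply_le (toepFin_isHermitian z)
    (fun i j => Finset.single_le_sum (f := fun k => |z k|) (fun k _ => abs_nonneg _)
      (Finset.mem_univ _)) ?_
  simpa using ht

end Toeplitz

lemma Polynomial.exists_eq_sum_C_mul_of_degree_eq {K : Type*} [Field K] (S : ℕ → K[X])
    (hS : ∀ n, (S n).degree = n) {N : ℕ} {P : K[X]} (hP : P.natDegree ≤ N) :
    ∃ c : Fin (N + 1) → K, P = ∑ k, Polynomial.C (c k) * S k := by
  let S' : Polynomial.Sequence K := ⟨S, hS⟩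
  have hspan : P ∈ Submodule.span K (S' '' Set.Iic N) := by
    rw [S'.span_degreeLE fun i _ => (leadingCoeff_ne_zero.mpr (S'.ne_zero i)).isUnit]
    exact mem_degreeLE.mpr (degree_le_of_natDegree_le hP)
  have himage : S' '' Set.Iic N = Set.range fun k : Fin (N + 1) => S k := by
    ext P
    constructor
    · rintro ⟨i, hi, rfl⟩
      exact ⟨⟨i, Nat.lt_succ_of_le hi⟩, rfl⟩
    · rintro ⟨k, rfl⟩
      exact ⟨k, Nat.le_of_lt_succ k.2, rfl⟩
  rw [himage] at hspan
  obtain ⟨c, hc⟩ := (Submodule.mem_span_range_iff_exists_fun K).mp hspan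
  exact ⟨c, by simp only [← hc, smul_eq_C_mul]⟩

lemma Polynomial.Chebyshev.exists_eq_sum_C_mul_T {N : ℕ} {P : ℝ[X]} (hP : P.natDegree ≤ N) :
    ∃ c : Fin (N + 1) → ℝ, P = ∑ k : Fin (N + 1), Polynomial.C (c k) * T ℝ ((k : ℕ) : ℤ) :=
  exists_eq_sum_C_mul_of_degree_eq (fun n => T ℝ n) (fun n => by simp [degree_T]) hP

lemma Polynomial.Chebyshev.exists_eq_sum_C_mul_U {N : ℕ} {P : ℝ[X]} (hP : P.natDegree ≤ N) :
    ∃ q : Fin (N + 1) → ℝ, P = ∑ n : Fin (N + 1), Polynomial.C (q n) * U ℝ ((n : ℕ) : ℤ) :=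
  exists_eq_sum_C_mul_of_degree_eq (fun n => U ℝ n) (fun n => degree_U_natCast ℝ n) hP

lemma Polynomial.Chebyshev.eval_cos_of_eq_sum_T {N : ℕ} {P : ℝ[X]} {c : Fin (N + 1) → ℝ}
    (hc : P = ∑ k : Fin (N + 1), Polynomial.C (c k) * T ℝ ((k : ℕ) : ℤ)) (θ : ℝ) :
    P.eval (cos θ) = ∑ k : Fin (N + 1), c k * cos (k * θ) := by
  simp [hc, eval_finsetSum, T_real_cos]

lemma Polynomial.Chebyshev.sin_mul_eval_cos_of_eq_sum_U {N : ℕ} {P : ℝ[X]}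
    {q : Fin (N + 1) → ℝ} (hq : P = ∑ n : Fin (N + 1), Polynomial.C (q n) * U ℝ ((n : ℕ) : ℤ))
    (θ : ℝ) :
    sin θ * P.eval (cos θ) = ∑ n : Fin (N + 1), q n * sin ((n + 1) * θ) := by
  simp only [hq, eval_finsetSum, eval_mul, Finset.mul_sum]
  refine Finset.sum_congr rfl fun n _ => ?_
  have h := U_real_cos θ ((n : ℕ) : ℤ)
  push_cast at h
  rw [eval_C, ← h]
  ring

section Transplant

variable {aℓ bℓ : ℝ}

lemma transplant_add (P Q : ℝ[X]) :
    transplant aℓ bℓ (P + Q) = transplant aℓ bℓ P + transplant aℓ bℓ Q :=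
  add_comp

lemma transplant_smul (c : ℝ) (P : ℝ[X]) : transplant aℓ bℓ (c • P) = c • transplant aℓ bℓ P :=
  smul_comp _ _ _

lemma natDegree_transplant_le {N : ℕ} {P : ℝ[X]} (hP : P.natDegree ≤ N) :
    (transplant aℓ bℓ P).natDegree ≤ N :=
  natDegree_comp_le.trans <| by
    simpa using Nat.mul_le_mul hP (natDegree_linear_le (a := (bℓ - aℓ) / 2) (b := (aℓ + bℓ) / 2))

lemma eq_zero_of_transplant_eq_zero (h : aℓ < bℓ) {P : ℝ[X]} (hP : transplant aℓ bℓ P = 0) :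
    P = 0 := by
  refine (comp_eq_zero_iff.mp hP).resolve_right fun ⟨_, hconst⟩ => ?_
  have := congrArg (coeff · 1) hconst
  simp at this
  linarith

end Transplant

lemma affine_cos_mem_Icc {a b : ℝ} (hab : a ≤ b) (θ : ℝ) :
    ((b - a) * cos θ + a + b) / 2 ∈ Set.Icc a b := by
  constructor <;> nlinarith [neg_one_le_cos θ, cos_le_one θ]

section Weighted

variable {W : ℝ → ℝ}

lemma sum_mul_integral_div (hW : Continuous W) (hW0 : ∀ θ, W θ ≠ 0) {ι : Type*} (s : Finset ι)
    (c : ι → ℝ) {f : ι → ℝ → ℝ} (hf : ∀ i, Continuous (f i)) (α β : ℝ) :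
    ∑ i ∈ s, c i * ∫ θ in α..β, f i θ / W θ = ∫ θ in α..β, (∑ i ∈ s, c i * f i θ) / W θ := by
  simp_rw [← intervalIntegral.integral_const_mul]
  rw [← intervalIntegral.integral_finsetSum]
  · simp_rw [Finset.sum_div, mul_div_assoc]
  · exact fun i _ => (continuous_const.mul ((hf i).div hW hW0)).intervalIntegrable α β

lemma integral_sin_mul_eval_cos_sq_div_pos (hW : Continuous W) (hWpos : ∀ θ, 0 < W θ)
    {P : ℝ[X]} (hP : P ≠ 0) : 0 < ∫ θ in 0..π, sin θ * P.eval (cos θ) ^ 2 / W θ := by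
  obtain ⟨x, hx, hPx⟩ : ∃ x ∈ Set.Ioo (-1 : ℝ) 1, P.eval x ≠ 0 := by
    by_contra! h
    exact hP (eq_zero_of_infinite_isRoot P ((Set.Ioo_infinite (by norm_num)).mono h))
  have hθ : arccos x ∈ Set.Ioo 0 π := ⟨arccos_pos.mpr hx.2, arccos_lt_pi.mpr hx.1⟩
  refine intervalIntegral.integral_pos pi_pos
    (Continuous.continuousOn (by fun_prop (disch := exact fun θ => (hWpos θ).ne')))
    (fun θ hθ => by
      have := sin_nonneg_of_nonneg_of_le_pi hθ.1.le hθ.2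
      have := hWpos θ
      positivity)
    ⟨arccos x, Set.Ioo_subset_Icc_self hθ, ?_⟩
  have := sin_pos_of_pos_of_lt_pi hθ.1 hθ.2
  have := hWpos (arccos x)
  rw [cos_arccos hx.1.le hx.2.le]
  positivity

lemma exists_pos_le_add_of_moments (hW : Continuous W) (hWpos : ∀ θ, 0 < W θ) {N d : ℕ}
    (hd : N ≤ d) {P : ℝ[X]} (hP : P.natDegree ≤ N) (hP0 : P ≠ 0) :
    ∃ δ > 0, ∀ yp ym : Fin (d + 1) → ℝ,
      (∀ k : Fin (d + 1),
        yp k - ym k = ∫ θ in 0..π, cos (k * θ) * (sin θ * P.eval (cos θ)) / W θ) →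
      (toepFin d yp).PosSemidef → (toepFin d ym).PosSemidef → δ ≤ yp 0 + ym 0 := by
  have hW0 : ∀ θ, W θ ≠ 0 := fun θ => (hWpos θ).ne'
  obtain ⟨c, hc⟩ := Chebyshev.exists_eq_sum_C_mul_T hP
  set S := ∫ θ in 0..π, sin θ * P.eval (cos θ) ^ 2 / W θ with hSdef
  have hS : 0 < S := integral_sin_mul_eval_cos_sq_div_pos hW hWpos hP0
  refine ⟨S / (∑ k, |c k| + 1), by positivity, fun yp ym hmoment hyp hym => ?_⟩
  let ι : Fin (N + 1) → Fin (d + 1) := Fin.castLE (by omega)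
  have hSsum : S = ∑ k, c k * (yp (ι k) - ym (ι k)) := by
    simp_rw [hSdef, hmoment]
    rw [sum_mul_integral_div hW hW0 _ _ (fun k => by fun_prop)]
    congr 1 with θ
    rw [Chebyshev.eval_cos_of_eq_sum_T hc θ]
    simp_rw [← mul_assoc, ← Finset.sum_mul]
    simp only [ι, Fin.val_castLE]
    ring
  have hmass := add_nonneg (nonneg_of_posSemidef_toepFin hyp) (nonneg_of_posSemidef_toepFin hym)
  have hbound : S ≤ (∑ k, |c k|) * (yp 0 + ym 0) := by
    rw [hSsum, Finset.sum_mul]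
    refine Finset.sum_le_sum fun k _ => ?_
    calc c k * (yp (ι k) - ym (ι k)) ≤ |c k| * |yp (ι k) - ym (ι k)| := by
          rw [← abs_mul]; exact le_abs_self _
      _ ≤ |c k| * (yp 0 + ym 0) := by
          gcongr
          linarith [abs_sub (yp (ι k)) (ym (ι k)), abs_le_of_posSemidef_toepFin hyp (ι k),
            abs_le_of_posSemidef_toepFin hym (ι k)]
  rw [div_le_iff₀ (by positivity)]
  nlinarith

end Weighted

/-- The weight `w_ℓ(cos θ)` in the integrand of `Jent`. -/
noncomputable def weightCos (aℓ bℓ : ℝ) (w : ℝ → ℝ) (θ : ℝ) : ℝ :=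
  w (((bℓ - aℓ) * cos θ + aℓ + bℓ) / 2)

lemma Jent_eq_integral_div_weightCos (aℓ bℓ : ℝ) (w : ℝ → ℝ) (k n : ℕ) :
    Jent aℓ bℓ w k n
      = ∫ θ in 0..π, cos (k * θ) * sin ((n + 1) * θ) / weightCos aℓ bℓ w θ :=
  rfl

lemma sum_Jent_mul_eq_integral {aℓ bℓ : ℝ} {w : ℝ → ℝ} (hW : Continuous (weightCos aℓ bℓ w))
    (hW0 : ∀ θ, weightCos aℓ bℓ w θ ≠ 0) {N : ℕ} {P : ℝ[X]} {q : Fin (N + 1) → ℝ}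
    (hq : P = ∑ n : Fin (N + 1), Polynomial.C (q n) * Chebyshev.U ℝ ((n : ℕ) : ℤ)) (k : ℕ) :
    ∑ n : Fin (N + 1), Jent aℓ bℓ w k n * q n
      = ∫ θ in 0..π, cos (k * θ) * (sin θ * P.eval (cos θ)) / weightCos aℓ bℓ w θ := by
  simp_rw [mul_comm (Jent _ _ _ _ _), Jent_eq_integral_div_weightCos]
  rw [sum_mul_integral_div hW hW0 _ _ (fun n => by fun_prop)]
  congr 1 with θ
  rw [Chebyshev.sin_mul_eval_cos_of_eq_sum_U hq, Finset.mul_sum]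
  congr 1
  exact Finset.sum_congr rfl fun n _ => by ring

def ersatzValues (L N d : ℕ) (a b : ℕ → ℝ) (w : ℝ → ℝ) (P : Polynomial ℝ) : Set ℝ :=
  { s : ℝ |
    ∃ q : ℕ → Fin (N + 1) → ℝ,
      (∀ ℓ < L, transplant (a ℓ) (b ℓ) P
          = ∑ n : Fin (N + 1), Polynomial.C (q ℓ n) * Polynomial.Chebyshev.U ℝ ((n : ℕ) : ℤ)) ∧
      ∃ yp ym : ℕ → Fin (d + 1) → ℝ,
        (∀ ℓ < L, ∀ k : Fin (d + 1),
            yp ℓ k - ym ℓ k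
              = ∑ n : Fin (N + 1), Jent (a ℓ) (b ℓ) w (k : ℕ) (n : ℕ) * q ℓ n) ∧
        (∀ ℓ < L, (toepFin d (yp ℓ)).PosSemidef ∧ (toepFin d (ym ℓ)).PosSemidef) ∧
        s = ∑ ℓ ∈ Finset.range L, ((b ℓ - a ℓ) / 2) * (yp ℓ 0 + ym ℓ 0) }

lemma ersatz_eq_sInf (L N d : ℕ) (a b : ℕ → ℝ) (w : ℝ → ℝ) (P : ℝ[X]) :
    ersatz L N d a b w P = sInf (ersatzValues L N d a b w P) :=
  rfl

section Ersatz

variable {L N d : ℕ} {a b : ℕ → ℝ} {w : ℝ → ℝ} {P Q : ℝ[X]}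

lemma ersatz_summand_nonneg {aℓ bℓ : ℝ} (hab : aℓ < bℓ) {yp ym : Fin (d + 1) → ℝ}
    (hyp : (toepFin d yp).PosSemidef) (hym : (toepFin d ym).PosSemidef) :
    0 ≤ (bℓ - aℓ) / 2 * (yp 0 + ym 0) :=
  mul_nonneg (by linarith)
    (add_nonneg (nonneg_of_posSemidef_toepFin hyp) (nonneg_of_posSemidef_toepFin hym))

lemma nonneg_of_mem_ersatzValues (hab : ∀ ℓ < L, a ℓ < b ℓ) {s : ℝ}
    (hs : s ∈ ersatzValues L N d a b w P) : 0 ≤ s := by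
  obtain ⟨q, -, yp, ym, -, hpsd, rfl⟩ := hs
  refine Finset.sum_nonneg fun ℓ hℓ => ?_
  rw [Finset.mem_range] at hℓ
  exact ersatz_summand_nonneg (hab ℓ hℓ) (hpsd ℓ hℓ).1 (hpsd ℓ hℓ).2

lemma bddBelow_ersatzValues (hab : ∀ ℓ < L, a ℓ < b ℓ) : BddBelow (ersatzValues L N d a b w P) :=
  ⟨0, fun _ => nonneg_of_mem_ersatzValues hab⟩

lemma ersatzValues_nonempty (hP : P.natDegree ≤ N) : (ersatzValues L N d a b w P).Nonempty := by
  choose q hq using fun ℓ =>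
    Chebyshev.exists_eq_sum_C_mul_U (natDegree_transplant_le (aℓ := a ℓ) (bℓ := b ℓ) hP)
  let z : ℕ → Fin (d + 1) → ℝ := fun ℓ k => ∑ n : Fin (N + 1), Jent (a ℓ) (b ℓ) w k n * q ℓ n
  let t : ℕ → ℝ := fun ℓ => (d + 1) * ∑ k, |z ℓ k|
  have ht : ∀ ℓ, 0 ≤ t ℓ := fun ℓ => by positivity
  refine ⟨_, q, fun ℓ _ => hq ℓ, fun ℓ => z ℓ + Pi.single 0 (t ℓ), fun ℓ => Pi.single 0 (t ℓ),
    fun ℓ _ k => by simp [z], fun ℓ _ => ⟨?_, ?_⟩, rfl⟩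
  · exact posSemidef_toepFin_add_single_zero (z ℓ) le_rfl
  · rw [toepFin_single_zero]
    exact PosSemidef.one.smul (ht ℓ)

lemma add_mem_ersatzValues {s t : ℝ} (hs : s ∈ ersatzValues L N d a b w P)
    (ht : t ∈ ersatzValues L N d a b w Q) : s + t ∈ ersatzValues L N d a b w (P + Q) := by
  obtain ⟨q, hq, yp, ym, hy, hpsd, rfl⟩ := hs
  obtain ⟨q', hq', yp', ym', hy', hpsd', rfl⟩ := ht
  refine ⟨q + q', fun ℓ hℓ => ?_, yp + yp', ym + ym', fun ℓ hℓ k => ?_, fun ℓ hℓ => ?_, ?_⟩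
  · simp [transplant_add, hq ℓ hℓ, hq' ℓ hℓ, ← Finset.sum_add_distrib, add_mul]
  · simp only [Pi.add_apply, mul_add, Finset.sum_add_distrib, ← hy ℓ hℓ k, ← hy' ℓ hℓ k]
    ring
  · exact ⟨(toepFin_add _ _ ▸ (hpsd ℓ hℓ).1.add (hpsd' ℓ hℓ).1),
      (toepFin_add _ _ ▸ (hpsd ℓ hℓ).2.add (hpsd' ℓ hℓ).2)⟩
  · simp only [Pi.add_apply, ← Finset.sum_add_distrib]
    exact Finset.sum_congr rfl fun ℓ _ => by ring

lemma smul_mem_ersatzValues_of_nonneg {c s : ℝ} (hc : 0 ≤ c)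
    (hs : s ∈ ersatzValues L N d a b w P) : c * s ∈ ersatzValues L N d a b w (c • P) := by
  obtain ⟨q, hq, yp, ym, hy, hpsd, rfl⟩ := hs
  refine ⟨c • q, fun ℓ hℓ => ?_, c • yp, c • ym, fun ℓ hℓ k => ?_, fun ℓ hℓ => ?_, ?_⟩
  · rw [transplant_smul, hq ℓ hℓ, Finset.smul_sum]
    refine Finset.sum_congr rfl fun n _ => ?_
    rw [Pi.smul_apply, Pi.smul_apply, smul_eq_mul, C_mul, smul_eq_C_mul, mul_assoc]
  · simp only [Pi.smul_apply, smul_eq_mul, ← mul_sub, hy ℓ hℓ k, Finset.mul_sum]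
    exact Finset.sum_congr rfl fun n _ => by ring
  · exact ⟨toepFin_smul c _ ▸ (hpsd ℓ hℓ).1.smul hc, toepFin_smul c _ ▸ (hpsd ℓ hℓ).2.smul hc⟩
  · simp only [Pi.smul_apply, smul_eq_mul, Finset.mul_sum]
    exact Finset.sum_congr rfl fun ℓ _ => by ring

lemma mem_ersatzValues_neg {s : ℝ} (hs : s ∈ ersatzValues L N d a b w P) :
    s ∈ ersatzValues L N d a b w (-P) := by
  obtain ⟨q, hq, yp, ym, hy, hpsd, rfl⟩ := hs
  refine ⟨-q, fun ℓ hℓ => ?_, ym, yp, fun ℓ hℓ k => ?_, fun ℓ hℓ => (hpsd ℓ hℓ).symm, ?_⟩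
  · rw [transplant, neg_comp, ← transplant, hq ℓ hℓ, ← Finset.sum_neg_distrib]
    simp only [Pi.neg_apply, C_neg, neg_mul]
  · rw [← neg_sub, hy ℓ hℓ k]
    simp only [Pi.neg_apply, mul_neg, Finset.sum_neg_distrib]
  · simp [add_comm]

lemma exists_pos_le_of_mem_ersatzValues (hL : 0 < L) (hab : ∀ ℓ < L, a ℓ < b ℓ)
    (hw : ContinuousOn w (⋃ ℓ ∈ Finset.range L, Set.Icc (a ℓ) (b ℓ)))
    (hwpos : ∀ x ∈ ⋃ ℓ ∈ Finset.range L, Set.Icc (a ℓ) (b ℓ), 0 < w x)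
    (hd : N ≤ d) (hP : P.natDegree ≤ N) (hP0 : P ≠ 0) :
    ∃ δ > 0, ∀ s ∈ ersatzValues L N d a b w P, δ ≤ s := by
  have hab0 := hab 0 hL
  have hK : ∀ θ,
      ((b 0 - a 0) * cos θ + a 0 + b 0) / 2 ∈ ⋃ ℓ ∈ Finset.range L, Set.Icc (a ℓ) (b ℓ) :=
    fun θ => Set.mem_biUnion (Finset.mem_range.mpr hL) (affine_cos_mem_Icc hab0.le θ)
  have hW : Continuous (weightCos (a 0) (b 0) w) := hw.comp_continuous (by fun_prop) hK
  have hWpos : ∀ θ, 0 < weightCos (a 0) (b 0) w θ := fun θ => hwpos _ (hK θ)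
  obtain ⟨δ, hδ, hlow⟩ := exists_pos_le_add_of_moments hW hWpos hd
    (natDegree_transplant_le hP) (mt (eq_zero_of_transplant_eq_zero hab0) hP0)
  refine ⟨(b 0 - a 0) / 2 * δ, by have := sub_pos.mpr hab0; positivity, ?_⟩
  rintro s ⟨q, hq, yp, ym, hy, hpsd, rfl⟩
  have hmass : δ ≤ yp 0 0 + ym 0 0 := hlow (yp 0) (ym 0)
    (fun k => by rw [hy 0 hL k, sum_Jent_mul_eq_integral hW (fun θ => (hWpos θ).ne') (hq 0 hL)])
    (hpsd 0 hL).1 (hpsd 0 hL).2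
  calc (b 0 - a 0) / 2 * δ ≤ (b 0 - a 0) / 2 * (yp 0 0 + ym 0 0) := by gcongr
    _ ≤ ∑ ℓ ∈ Finset.range L, (b ℓ - a ℓ) / 2 * (yp ℓ 0 + ym ℓ 0) :=
        Finset.single_le_sum (f := fun ℓ => (b ℓ - a ℓ) / 2 * (yp ℓ 0 + ym ℓ 0))
          (fun ℓ hℓ => by
            rw [Finset.mem_range] at hℓ
            exact ersatz_summand_nonneg (hab ℓ hℓ) (hpsd ℓ hℓ).1 (hpsd ℓ hℓ).2)
          (Finset.mem_range.mpr hL)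

lemma ersatz_nonneg (hab : ∀ ℓ < L, a ℓ < b ℓ) (hP : P.natDegree ≤ N) :
    0 ≤ ersatz L N d a b w P :=
  le_csInf (ersatzValues_nonempty hP) fun _ => nonneg_of_mem_ersatzValues hab

lemma ersatz_add_le (hab : ∀ ℓ < L, a ℓ < b ℓ) (hP : P.natDegree ≤ N) (hQ : Q.natDegree ≤ N) :
    ersatz L N d a b w (P + Q) ≤ ersatz L N d a b w P + ersatz L N d a b w Q := by
  simp only [ersatz_eq_sInf]
  rw [← csInf_add (ersatzValues_nonempty hP) (bddBelow_ersatzValues hab)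
    (ersatzValues_nonempty hQ) (bddBelow_ersatzValues hab)]
  exact csInf_le_csInf (bddBelow_ersatzValues hab)
    ((ersatzValues_nonempty hP).add (ersatzValues_nonempty hQ))
    (by rintro _ ⟨s, hs, t, ht, rfl⟩; exact add_mem_ersatzValues hs ht)

lemma ersatz_smul_le (hab : ∀ ℓ < L, a ℓ < b ℓ) (hP : P.natDegree ≤ N) (c : ℝ) :
    ersatz L N d a b w (c • P) ≤ |c| * ersatz L N d a b w P := by
  simp only [ersatz_eq_sInf]
  rw [← smul_eq_mul, ← Real.sInf_smul_of_nonneg (abs_nonneg c)]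
  refine csInf_le_csInf (bddBelow_ersatzValues hab) ((ersatzValues_nonempty hP).smul_set) ?_
  rintro _ ⟨s, hs, rfl⟩
  have hs' := smul_mem_ersatzValues_of_nonneg (abs_nonneg c) hs
  rcases abs_cases c with ⟨hc, -⟩ | ⟨hc, -⟩
  · rwa [hc] at hs' ⊢
  · rw [hc] at hs' ⊢
    simpa [neg_smul] using mem_ersatzValues_neg hs'

lemma ersatz_smul (hab : ∀ ℓ < L, a ℓ < b ℓ) (hP : P.natDegree ≤ N) (c : ℝ) :
    ersatz L N d a b w (c • P) = |c| * ersatz L N d a b w P := by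
  refine le_antisymm (ersatz_smul_le hab hP c) ?_
  rcases eq_or_ne c 0 with rfl | hc
  · simpa using ersatz_nonneg hab (natDegree_zero.trans_le N.zero_le)
  · have := ersatz_smul_le (d := d) (w := w) hab ((natDegree_smul_le c P).trans hP) c⁻¹
    rw [inv_smul_smul₀ hc, abs_inv] at this
    rwa [← le_div_iff₀' (abs_pos.mpr hc), div_eq_inv_mul]

lemma ersatz_pos (hL : 0 < L) (hab : ∀ ℓ < L, a ℓ < b ℓ)
    (hw : ContinuousOn w (⋃ ℓ ∈ Finset.range L, Set.Icc (a ℓ) (b ℓ)))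
    (hwpos : ∀ x ∈ ⋃ ℓ ∈ Finset.range L, Set.Icc (a ℓ) (b ℓ), 0 < w x)
    (hd : N ≤ d) (hP : P.natDegree ≤ N) (hP0 : P ≠ 0) : 0 < ersatz L N d a b w P := by
  obtain ⟨δ, hδ, hlow⟩ := exists_pos_le_of_mem_ersatzValues hL hab hw hwpos hd hP hP0
  exact hδ.trans_le (le_csInf (ersatzValues_nonempty hP) hlow)

end Ersatz

theorem ersatz_is_norm_general
    (L : ℕ) (hL : 0 < L) (a b : ℕ → ℝ)
    (hab : ∀ ℓ < L, a ℓ < b ℓ)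
    (w : ℝ → ℝ)
    (hw : ContinuousOn w (⋃ ℓ ∈ Finset.range L, Set.Icc (a ℓ) (b ℓ)))
    (hwpos : ∀ x ∈ ⋃ ℓ ∈ Finset.range L, Set.Icc (a ℓ) (b ℓ), 0 < w x)
    (N d : ℕ) (hd : N ≤ d) :
    (∀ P : Polynomial ℝ, P.natDegree ≤ N → 0 ≤ ersatz L N d a b w P) ∧
    (∀ (c : ℝ) (P : Polynomial ℝ), P.natDegree ≤ N →
      ersatz L N d a b w (c • P) = |c| * ersatz L N d a b w P) ∧
    (∀ P Q : Polynomial ℝ, P.natDegree ≤ N → Q.natDegree ≤ N →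
      ersatz L N d a b w (P + Q) ≤ ersatz L N d a b w P + ersatz L N d a b w Q) ∧
    (∀ P : Polynomial ℝ, P.natDegree ≤ N → ersatz L N d a b w P = 0 → P = 0) :=
  ⟨fun _ => ersatz_nonneg hab, fun c _ hP => ersatz_smul hab hP c,
    fun _ _ => ersatz_add_le hab,
    fun _ hP h0 => by_contra fun hP0 => (ersatz_pos hL hab hw hwpos hd hP hP0).ne' h0⟩

/-- For `d ≥ N`, the ersatz functional `⫽·⫽_d` is a norm on the space of polynomials of
degree at most `N`: it is nonnegative, absolutely homogeneous, satisfies the triangle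
inequality, and vanishes only at `0`. -/
theorem ersatz_is_norm
    (L : ℕ) (hL : 0 < L) (a b : ℕ → ℝ)
    (ha0 : a 0 = -1) (hbL : b (L - 1) = 1)
    (hab : ∀ ℓ < L, a ℓ < b ℓ)
    (hgap : ∀ ℓ, ℓ + 1 < L → b ℓ < a (ℓ + 1))
    (w : ℝ → ℝ)
    (hw : ContinuousOn w (⋃ ℓ ∈ Finset.range L, Set.Icc (a ℓ) (b ℓ)))
    (hwpos : ∀ x ∈ ⋃ ℓ ∈ Finset.range L, Set.Icc (a ℓ) (b ℓ), 0 < w x)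
    (N d : ℕ) (hd : N ≤ d) :
    (∀ P : Polynomial ℝ, P.natDegree ≤ N → 0 ≤ ersatz L N d a b w P) ∧
    (∀ (c : ℝ) (P : Polynomial ℝ), P.natDegree ≤ N →
      ersatz L N d a b w (c • P) = |c| * ersatz L N d a b w P) ∧
    (∀ P Q : Polynomial ℝ, P.natDegree ≤ N → Q.natDegree ≤ N →
      ersatz L N d a b w (P + Q) ≤ ersatz L N d a b w P + ersatz L N d a b w Q) ∧
    (∀ P : Polynomial ℝ, P.natDegree ≤ N → ersatz L N d a b w P = 0 → P = 0) :=
  ersatz_is_norm_general L hL a b hab w hw hwpos N d hd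
end

section
/- Let K = ⋃_{ℓ=1}^L [a_ℓ, b_ℓ] ⊆ [−1,1] with −1 = a_1 < b_1 < a_2 < ⋯ < a_L < b_L = 1, let w be continuous and strictly positive on K, let N ≥ 1, and let U be a monic polynomial of degree N such that ∫_K sgn(U(x))·P(x)/w(x) dx = 0 for every polynomial P of degree strictly less than N. Then U has N distinct real roots, all lying in the open interval (−1, 1); in particular all roots of U are simple. -/
open MeasureTheory Filter Polynomial

/-!
Let `T` be the set of roots of `U` in `(-1, 1)` of odd multiplicity and `P = ∏_{r ∈ T} (X - r)`.
Every root of `U * P` in `(-1, 1)` has even multiplicity, so `U * P` does not change sign there;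
hence `sgn(U) * P / w` has constant sign on `K ⊆ [-1, 1]` and vanishes only at finitely many
points, and its integral over `K` is nonzero. Orthogonality therefore forces `#T ≥ N`, so `U`
has `N` distinct roots in `(-1, 1)`, and being monic of degree `N` it equals `P`.
-/

open Set

namespace Real

lemma sign_eq_div_abs (u : ℝ) : Real.sign u = u / |u| := by
  rcases lt_trichotomy u 0 with h | rfl | h
  · rw [sign_of_neg h, abs_of_neg h, div_neg, div_self h.ne]
  · simp
  · rw [sign_of_pos h, abs_of_pos h, div_self h.ne']

lemma sign_mul_div_eq (u p v : ℝ) : Real.sign u * p / v = u * p / (|u| * v) := by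
  rw [sign_eq_div_abs, div_mul_eq_mul_div, div_div]

lemma abs_sign_le_one (u : ℝ) : |Real.sign u| ≤ 1 := by
  rcases sign_apply_eq u with h | h | h <;> simp [h]

lemma measurable_sign : Measurable Real.sign := by
  rw [funext sign_eq_div_abs]
  exact measurable_id.div continuous_abs.measurable

end Real

namespace Polynomial

section CommRing

variable {R : Type*} [CommRing R] [IsDomain R]

lemma rootMultiplicity_finsetProd_X_sub_C [DecidableEq R] (T : Finset R) (x : R) :
    (∏ r ∈ T, (X - C r)).rootMultiplicity x = if x ∈ T then 1 else 0 := by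
  rw [← count_roots, roots_prod_X_sub_C, Multiset.count_eq_of_nodup T.nodup]
  rfl

lemma eq_finsetProd_X_sub_C_of_natDegree_le_card {U : R[X]} (hU : U.Monic) {T : Finset R}
    (hT : ∀ r ∈ T, U.IsRoot r) (hcard : U.natDegree ≤ T.card) : U = ∏ r ∈ T, (X - C r) := by
  refine eq_of_monic_of_dvd_of_natDegree_le (monic_prod_X_sub_C _ T) hU ?_ (by simpa using hcard)
  rw [Finset.prod_eq_multiset_prod, Multiset.prod_X_sub_C_dvd_iff_le_roots hU.ne_zero,
    Multiset.le_iff_subset T.nodup]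
  exact fun r hr => (mem_roots hU.ne_zero).2 (hT r hr)

open scoped Classical in
noncomputable def oddRoots (U : R[X]) (s : Set R) : Finset R :=
  U.roots.toFinset.filter fun r => r ∈ s ∧ Odd (U.rootMultiplicity r)

lemma mem_oddRoots {U : R[X]} {s : Set R} {r : R} :
    r ∈ oddRoots U s ↔ r ∈ s ∧ Odd (U.rootMultiplicity r) := by
  simp only [oddRoots, Finset.mem_filter, Multiset.mem_toFinset, mem_roots', and_iff_right_iff_imp]
  exact fun h => rootMultiplicity_pos'.1 h.2.pos

lemma isRoot_of_mem_oddRoots {U : R[X]} {s : Set R} {r : R} (hr : r ∈ oddRoots U s) :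
    U.IsRoot r :=
  (rootMultiplicity_pos'.1 (mem_oddRoots.1 hr).2.pos).2

lemma even_rootMultiplicity_mul_prod_oddRoots {U : R[X]} (hU : U ≠ 0) {s : Set R} {x : R}
    (hx : x ∈ s) : Even ((U * ∏ r ∈ oddRoots U s, (X - C r)).rootMultiplicity x) := by
  classical
  rw [rootMultiplicity_mul (mul_ne_zero hU (monic_prod_X_sub_C _ _).ne_zero),
    rootMultiplicity_finsetProd_X_sub_C]
  by_cases h : Odd (U.rootMultiplicity x)
  · rw [if_pos (mem_oddRoots.2 ⟨hx, h⟩)]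
    exact h.add_one
  · rw [if_neg fun hr => h (mem_oddRoots.1 hr).2, add_zero]
    exact Nat.not_odd_iff_even.1 h

end CommRing

section Real

variable {s : Set ℝ}

lemma eval_mul_eval_nonneg_of_even_rootMultiplicity (hs : s.OrdConnected) {W : ℝ[X]}
    (hW : W ≠ 0) (heven : ∀ x ∈ s, Even (W.rootMultiplicity x)) {x y : ℝ} (hx : x ∈ s)
    (hy : y ∈ s) : 0 ≤ W.eval x * W.eval y := by
  induction hn : W.natDegree using Nat.strong_induction_on generalizing W with
  | _ n ih =>
  by_contra! hneg
  obtain ⟨r, hr, hr0⟩ : ∃ r ∈ uIcc x y, W.eval r = 0 := by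
    refine intermediate_value_uIcc W.continuous.continuousOn (mem_uIcc.2 ?_)
    rcases mul_neg_iff.1 hneg with h | h
    · exact Or.inr ⟨h.2.le, h.1.le⟩
    · exact Or.inl ⟨h.1.le, h.2.le⟩
  set m := W.rootMultiplicity r
  set Q := W /ₘ (X - C r) ^ m
  have hWQ : (X - C r) ^ m * Q = W := pow_mul_divByMonic_rootMultiplicity_eq W r
  have hm_even : Even m := heven r (hs.uIcc_subset hx hy hr)
  have hm_pos : 0 < m := (rootMultiplicity_pos hW).2 hr0
  have hQ : Q ≠ 0 := fun h => hW (by rw [← hWQ, h, mul_zero])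
  have hQdeg : Q.natDegree < n := by
    rw [← hn, ← hWQ, natDegree_mul (pow_ne_zero _ (X_sub_C_ne_zero r)) hQ, natDegree_pow,
      natDegree_X_sub_C]
    omega
  have hQeven : ∀ z ∈ s, Even (Q.rootMultiplicity z) := by
    intro z hz
    have hpow : Even (((X - C r) ^ m).rootMultiplicity z) := by
      rw [← count_roots, roots_pow, roots_X_sub_C, Multiset.count_nsmul]
      exact hm_even.mul_right _
    have hWz := heven z hz
    rw [← hWQ, rootMultiplicity_mul (hWQ ▸ hW), Nat.even_add] at hWz
    exact hWz.1 hpow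
  have heval : ∀ t, W.eval t = (t - r) ^ m * Q.eval t := fun t => by
    rw [← hWQ, eval_mul, eval_pow, eval_sub, eval_X, eval_C]
  refine hneg.not_ge ?_
  rw [heval, heval, mul_mul_mul_comm]
  exact mul_nonneg (mul_nonneg (hm_even.pow_nonneg _) (hm_even.pow_nonneg _))
    (ih _ hQdeg hQ hQeven rfl)

lemma eval_nonneg_or_eval_nonpos_of_even_rootMultiplicity (hs : s.OrdConnected) {W : ℝ[X]}
    (hW : W ≠ 0) (heven : ∀ x ∈ s, Even (W.rootMultiplicity x)) :
    (∀ x ∈ s, 0 ≤ W.eval x) ∨ (∀ x ∈ s, W.eval x ≤ 0) := by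
  by_cases h : ∃ x₀ ∈ s, 0 < W.eval x₀
  · obtain ⟨x₀, hx₀, hpos⟩ := h
    exact Or.inl fun x hx => nonneg_of_mul_nonneg_right
      (eval_mul_eval_nonneg_of_even_rootMultiplicity hs hW heven hx₀ hx) hpos
  · push Not at h
    exact Or.inr h

lemma ae_eval_ne_zero {p : ℝ[X]} (hp : p ≠ 0) : ∀ᵐ x : ℝ, p.eval x ≠ 0 := by
  rw [ae_iff]
  simpa using (finite_setOfPred_isRoot hp).measure_zero volume

end Real

end Polynomial

lemma intervalIntegral_pos_of_ae_pos_on {f : ℝ → ℝ} {a b : ℝ}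
    (hfi : IntervalIntegrable f volume a b) (hpos : ∀ᵐ x, x ∈ Ioo a b → 0 < f x) (hab : a < b) :
    0 < ∫ x in a..b, f x := by
  have hnonneg : 0 ≤ᵐ[volume.restrict (uIoc a b)] f := by
    rw [EventuallyLE, uIoc_of_le hab.le]
    refine ae_restrict_of_ae_eq_of_ae_restrict Ioo_ae_eq_Ioc ?_
    rw [ae_restrict_iff' measurableSet_Ioo]
    filter_upwards [hpos] with x hx hxI using (hx hxI).le
  rw [intervalIntegral.integral_pos_iff_support_of_nonneg_ae' hnonneg hfi]
  refine ⟨hab, ((Measure.measure_Ioo_pos _).2 hab).trans_le (measure_mono_ae ?_)⟩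
  filter_upwards [hpos] with x hx hxI
  exact ⟨(hx hxI).ne', Ioo_subset_Ioc_self hxI⟩

lemma endpoints_le_of_sorted {L : ℕ} {a b : ℕ → ℝ} (hab : ∀ ℓ < L, a ℓ < b ℓ)
    (hgap : ∀ ℓ, ℓ + 1 < L → b ℓ < a (ℓ + 1)) {i j : ℕ} (hij : i ≤ j) (hj : j < L) :
    a i ≤ a j ∧ b i ≤ b j := by
  induction j, hij using Nat.le_induction with
  | base => exact ⟨le_rfl, le_rfl⟩
  | succ j _ ih =>
    obtain ⟨ha, hb⟩ := ih (by omega)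
    have := hab j (by omega)
    have := hgap j hj
    have := hab (j + 1) hj
    constructor <;> linarith

lemma Ioo_subset_Ioo_of_sorted {L : ℕ} {a b : ℕ → ℝ} (hab : ∀ ℓ < L, a ℓ < b ℓ)
    (hgap : ∀ ℓ, ℓ + 1 < L → b ℓ < a (ℓ + 1)) {ℓ : ℕ} (hℓ : ℓ < L) :
    Ioo (a ℓ) (b ℓ) ⊆ Ioo (a 0) (b (L - 1)) :=
  Ioo_subset_Ioo (endpoints_le_of_sorted hab hgap (Nat.zero_le ℓ) hℓ).1
    (endpoints_le_of_sorted hab hgap (Nat.le_sub_one_of_lt hℓ) (by omega)).2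

lemma intervalIntegrable_sign_eval_mul_div (U P : ℝ[X]) {w : ℝ → ℝ} {a b : ℝ} (hab : a ≤ b)
    (hw : ContinuousOn w (Icc a b)) (hw0 : ∀ x ∈ Icc a b, w x ≠ 0) :
    IntervalIntegrable (fun x => Real.sign (U.eval x) * P.eval x / w x) volume a b := by
  have hP_div_w : IntegrableOn (fun x => P.eval x / w x) (Ioc a b) := by
    refine (ContinuousOn.intervalIntegrable ?_).1
    rw [uIcc_of_le hab]
    exact P.continuousOn.div hw hw0
  have hsign : AEStronglyMeasurable (fun x => Real.sign (U.eval x)) (volume.restrict (Ioc a b)) :=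
    (Real.measurable_sign.comp U.continuous.measurable).aestronglyMeasurable
  rw [intervalIntegrable_iff_integrableOn_Ioc_of_le hab]
  simp only [mul_div_assoc]
  exact hP_div_w.bdd_mul hsign (ae_of_all _ fun x => by simpa using Real.abs_sign_le_one (U.eval x))

lemma sum_integral_sign_mul_div_pos {L : ℕ} (hL : 0 < L) {a b : ℕ → ℝ}
    (hab : ∀ ℓ < L, a ℓ < b ℓ) {w : ℝ → ℝ} (hw : ContinuousOn w (Icc (a 0) (b 0)))
    (hwpos : ∀ ℓ < L, ∀ x ∈ Icc (a ℓ) (b ℓ), 0 < w x) {U P : ℝ[X]} (hUP : U * P ≠ 0)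
    (hUP_nonneg : ∀ ℓ < L, ∀ x ∈ Ioo (a ℓ) (b ℓ), 0 ≤ (U * P).eval x) :
    0 < ∑ ℓ ∈ Finset.range L, ∫ x in a ℓ..b ℓ, Real.sign (U.eval x) * P.eval x / w x := by
  refine Finset.sum_pos' (fun ℓ hℓ => ?_) ⟨0, Finset.mem_range.2 hL, ?_⟩
  · have hℓ := Finset.mem_range.1 hℓ
    rw [intervalIntegral.integral_of_le (hab ℓ hℓ).le, integral_Ioc_eq_integral_Ioo]
    refine setIntegral_nonneg measurableSet_Ioo fun x hx => ?_
    rw [Real.sign_mul_div_eq, ← eval_mul]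
    exact div_nonneg (hUP_nonneg ℓ hℓ x hx)
      (mul_nonneg (abs_nonneg _) (hwpos ℓ hℓ x (Ioo_subset_Icc_self hx)).le)
  · have hint := intervalIntegrable_sign_eval_mul_div U P (hab 0 hL).le hw
      fun x hx => (hwpos 0 hL x hx).ne'
    refine intervalIntegral_pos_of_ae_pos_on hint ?_ (hab 0 hL)
    filter_upwards [ae_eval_ne_zero hUP] with x hx hxI
    rw [Real.sign_mul_div_eq, ← eval_mul]
    refine div_pos ((hUP_nonneg 0 hL x hxI).lt_of_ne' hx)
      (mul_pos (abs_pos.2 ?_) (hwpos 0 hL x (Ioo_subset_Icc_self hxI)))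
    exact left_ne_zero_of_mul (by rwa [eval_mul] at hx)

lemma Finset.exists_strictMono_prod_eq {α M : Type*} [LinearOrder α] [CommMonoid M]
    (T : Finset α) {n : ℕ} (hn : T.card = n) (f : α → M) :
    ∃ ξ : Fin n → α, StrictMono ξ ∧ (∀ i, ξ i ∈ T) ∧ ∏ r ∈ T, f r = ∏ i, f (ξ i) := by
  refine ⟨fun i => T.orderIsoOfFin hn i, fun i j hij => (T.orderIsoOfFin hn).strictMono hij,
    fun i => (T.orderIsoOfFin hn i).2, ?_⟩
  rw [← Finset.prod_coe_sort T]
  exact ((T.orderIsoOfFin hn).toEquiv.prod_comp fun r : T => f r).symm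

theorem orthogonality_implies_simple_roots_general
    (L : ℕ) (hL : 0 < L) (a b : ℕ → ℝ)
    (ha0 : a 0 = -1) (hbL : b (L - 1) = 1)
    (hab : ∀ ℓ < L, a ℓ < b ℓ)
    (hgap : ∀ ℓ, ℓ + 1 < L → b ℓ < a (ℓ + 1))
    (w : ℝ → ℝ)
    (hw : ContinuousOn w (⋃ ℓ ∈ Finset.range L, Set.Icc (a ℓ) (b ℓ)))
    (hwpos : ∀ x ∈ ⋃ ℓ ∈ Finset.range L, Set.Icc (a ℓ) (b ℓ), 0 < w x)
    (N : ℕ)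
    (U : Polynomial ℝ) (hUmonic : U.Monic) (hUdeg : U.natDegree = N)
    (hortho : ∀ P : Polynomial ℝ, P.degree < (N : WithBot ℕ) →
      ∑ ℓ ∈ Finset.range L,
        (∫ x in (a ℓ)..(b ℓ), Real.sign (U.eval x) * P.eval x / w x) = 0) :
    ∃ ξ : Fin N → ℝ, StrictMono ξ ∧ (∀ i, ξ i ∈ Set.Ioo (-1 : ℝ) 1) ∧
      U = ∏ i : Fin N, (Polynomial.X - Polynomial.C (ξ i)) := by
  have hU := hUmonic.ne_zero
  set T := oddRoots U (Ioo (-1) 1)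
  set P := ∏ r ∈ T, (X - C r)
  have hP : P ≠ 0 := (monic_prod_X_sub_C _ T).ne_zero
  have hK : ∀ ℓ < L, Ioo (a ℓ) (b ℓ) ⊆ Ioo (-1) 1 := fun ℓ hℓ => by
    simpa only [ha0, hbL] using Ioo_subset_Ioo_of_sorted hab hgap hℓ
  have hwpos' : ∀ ℓ < L, ∀ x ∈ Icc (a ℓ) (b ℓ), 0 < w x := fun ℓ hℓ x hx =>
    hwpos x (mem_biUnion (Finset.mem_range.2 hℓ) hx)
  have hw0 : ContinuousOn w (Icc (a 0) (b 0)) :=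
    hw.mono (subset_biUnion_of_mem (u := fun ℓ => Icc (a ℓ) (b ℓ)) (Finset.mem_range.2 hL))
  have hcard : N ≤ T.card := by
    by_contra! hlt
    have hPdeg : P.degree < N := by
      rw [degree_eq_natDegree hP, natDegree_finsetProd_X_sub_C_eq_card]
      exact_mod_cast hlt
    rcases eval_nonneg_or_eval_nonpos_of_even_rootMultiplicity ordConnected_Ioo
      (mul_ne_zero hU hP) fun x hx => even_rootMultiplicity_mul_prod_oddRoots hU hx with h | h
    · exact (sum_integral_sign_mul_div_pos hL hab hw0 hwpos' (mul_ne_zero hU hP)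
        fun ℓ hℓ x hx => h x (hK ℓ hℓ hx)).ne' (hortho P hPdeg)
    · refine (sum_integral_sign_mul_div_pos hL hab hw0 hwpos' (mul_ne_zero hU (neg_ne_zero.2 hP))
        fun ℓ hℓ x hx => ?_).ne' (hortho (-P) (by rwa [degree_neg]))
      rw [mul_neg, eval_neg]
      exact neg_nonneg.2 (h x (hK ℓ hℓ hx))
  have hUP : U = P := eq_finsetProd_X_sub_C_of_natDegree_le_card hUmonic
    (fun r hr => isRoot_of_mem_oddRoots hr) (hUdeg ▸ hcard)
  have hTN : T.card = N := by rw [← hUdeg, hUP, natDegree_finsetProd_X_sub_C_eq_card]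
  obtain ⟨ξ, hξ, hξT, hprod⟩ := T.exists_strictMono_prod_eq hTN fun r => X - C r
  exact ⟨ξ, hξ, fun i => (mem_oddRoots.1 (hξT i)).1, hUP.trans hprod⟩

/-- If a monic polynomial `U` of degree `N` satisfies the sign-orthogonality condition
`∫_K sgn(U(x)) P(x) / w(x) dx = 0` for all polynomials `P` of degree `< N`, then `U` has
`N` distinct real roots, all lying in `(-1, 1)`; in particular all roots are simple. -/
theorem orthogonality_implies_simple_roots
    (L : ℕ) (hL : 0 < L) (a b : ℕ → ℝ)
    (ha0 : a 0 = -1) (hbL : b (L - 1) = 1)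
    (hab : ∀ ℓ < L, a ℓ < b ℓ)
    (hgap : ∀ ℓ, ℓ + 1 < L → b ℓ < a (ℓ + 1))
    (w : ℝ → ℝ)
    (hw : ContinuousOn w (⋃ ℓ ∈ Finset.range L, Set.Icc (a ℓ) (b ℓ)))
    (hwpos : ∀ x ∈ ⋃ ℓ ∈ Finset.range L, Set.Icc (a ℓ) (b ℓ), 0 < w x)
    (N : ℕ) (hN : 1 ≤ N)
    (U : Polynomial ℝ) (hUmonic : U.Monic) (hUdeg : U.natDegree = N)
    (hortho : ∀ P : Polynomial ℝ, P.degree < (N : WithBot ℕ) →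
      ∑ ℓ ∈ Finset.range L,
        (∫ x in (a ℓ)..(b ℓ), Real.sign (U.eval x) * P.eval x / w x) = 0) :
    ∃ ξ : Fin N → ℝ, StrictMono ξ ∧ (∀ i, ξ i ∈ Set.Ioo (-1 : ℝ) 1) ∧
      U = ∏ i : Fin N, (Polynomial.X - Polynomial.C (ξ i)) :=
  orthogonality_implies_simple_roots_general L hL a b ha0 hbL hab hgap w hw hwpos N U hUmonic hUdeg
    hortho
end

section
/- Let K = ⋃_{ℓ=1}^L [a_ℓ, b_ℓ] ⊆ [−1,1] with −1 = a_1 < b_1 < a_2 < ⋯ < a_L < b_L = 1. For each N ≥ 1 let t_N := min{ ‖P‖_K : P monic of degree N } and s_N := min{ ‖P‖_{L2(K)} : P monic of degree N }. Then s_N^{1/N} / t_N^{1/N} → 1 as N → ∞; in particular, if t_N^{1/N} converges to a limit c, then s_N^{1/N} also converges to c. -/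
/-!
The two minimal norms differ by at most a factor polynomial in `N`, which disappears under
`N`-th roots. One direction is `‖P‖_{L2(K)} ≤ |K|^{1/2} ‖P‖_K`. For the other, move each interval
affinely onto `[-1, 1]` and expand `P = ∑_{k ≤ N} β_k U_k` in Chebyshev polynomials of the second
kind. Since `P(cos θ) sin θ = ∑ β_k sin((k+1)θ)`, orthogonality of the sines on `[0, π]` and
`sin² ≤ sin` give the Bessel inequality `(π/2) ∑ β_k² ≤ ∫_{-1}^1 P²`; with `|U_k| ≤ k + 1` this is
the Nikolskii inequality `‖P‖_{[-1,1]} ≤ (N+1)² (2/π)^{1/2} ‖P‖_{L2[-1,1]}`. The same Bessel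
inequality applied to `β_N = lc(P) / 2^N` bounds the `L2` norm of monic polynomials away from `0`,
so both minimal norms are positive.
-/

open MeasureTheory Filter Polynomial

/-- The sup norm `‖P‖_K = max_{x ∈ K} |P(x)|` on `K = ⋃_{ℓ<L} [a ℓ, b ℓ]`. -/
noncomputable def supK (L : ℕ) (a b : ℕ → ℝ) (P : Polynomial ℝ) : ℝ :=
  sSup ((fun x => |P.eval x|) '' ⋃ ℓ ∈ Finset.range L, Set.Icc (a ℓ) (b ℓ))

/-- The `L2` norm `‖P‖_{L2(K)} = (∑_ℓ ∫_{a_ℓ}^{b_ℓ} P(t)² dt)^{1/2}`. -/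
noncomputable def L2K (L : ℕ) (a b : ℕ → ℝ) (P : Polynomial ℝ) : ℝ :=
  Real.sqrt (∑ ℓ ∈ Finset.range L, ∫ t in (a ℓ)..(b ℓ), (P.eval t) ^ 2)

open Polynomial.Chebyshev Real Set Finset Topology

namespace Polynomial.Chebyshev

theorem coeff_U_natCast_self {R : Type*} [CommRing R] [IsDomain R] [NeZero (2 : R)] (k : ℕ) :
    (U R k).coeff k = 2 ^ k := by
  rw [← leadingCoeff_U_natCast R k, leadingCoeff, natDegree_U_natCast]

theorem exists_eq_sum_smul_U {K : Type*} [Field K] [NeZero (2 : K)] :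
    ∀ (n : ℕ) (P : K[X]), P.natDegree ≤ n →
      ∃ β : ℕ → K, P = ∑ k ∈ range (n + 1), β k • U K k ∧ P.coeff n = 2 ^ n * β n
  | 0, P, hP =>
    ⟨fun _ => P.coeff 0, by simpa [smul_eq_C_mul] using eq_C_of_natDegree_le_zero hP, by simp⟩
  | n + 1, P, hP => by
    set c := P.coeff (n + 1) / 2 ^ (n + 1)
    have hc : P.coeff (n + 1) = 2 ^ (n + 1) * c := by
      simp only [c]
      field_simp
    have hdeg : (P - c • U K (n + 1 : ℕ)).natDegree ≤ n := by
      refine natDegree_le_iff_coeff_eq_zero.2 fun m hm => ?_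
      obtain rfl | hm := (Nat.succ_le_of_lt hm).eq_or_lt
      · rw [coeff_sub, coeff_smul, smul_eq_mul, coeff_U_natCast_self, hc, mul_comm, sub_self]
      · rw [coeff_sub, coeff_smul, smul_eq_mul, coeff_eq_zero_of_natDegree_lt (hP.trans_lt hm),
          coeff_eq_zero_of_natDegree_lt (by rwa [natDegree_U_natCast]), mul_zero, sub_zero]
    obtain ⟨β, hβ, -⟩ := exists_eq_sum_smul_U n _ hdeg
    refine ⟨Function.update β (n + 1) c, ?_, by simpa [mul_comm] using hc⟩
    rw [sum_range_succ, Function.update_self, ← sub_eq_iff_eq_add, hβ]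
    refine sum_congr rfl fun k hk => ?_
    rw [Function.update_of_ne (by rw [Finset.mem_range] at hk; omega)]

theorem abs_eval_U_real_le {x : ℝ} (hx : |x| ≤ 1) : ∀ k : ℕ, |(U ℝ k).eval x| ≤ k + 1
  | 0 => by simp
  | k + 1 => by
    have hT := abs_eval_T_real_le_one ((k : ℤ) + 1) hx
    have hU := abs_eval_U_real_le hx k
    rw [Nat.cast_succ, U_eq_X_mul_U_add_T, eval_add, eval_mul, eval_X]
    calc |x * (U ℝ k).eval x + (T ℝ (k + 1)).eval x|
        ≤ |x| * |(U ℝ k).eval x| + |(T ℝ (k + 1)).eval x| := by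
          rw [← abs_mul]
          exact abs_add_le _ _
      _ ≤ 1 * (k + 1) + 1 := by gcongr
      _ = ((k + 1 : ℕ) : ℝ) + 1 := by push_cast; ring

end Polynomial.Chebyshev

theorem integral_cos_int_mul_eq_zero {m : ℤ} (hm : m ≠ 0) : ∫ θ in 0..π, cos (m * θ) = 0 := by
  rw [intervalIntegral.integral_comp_mul_left cos (Int.cast_ne_zero.2 hm), integral_cos, mul_zero,
    sin_zero, sin_int_mul_pi, sub_zero, smul_zero]

theorem integral_sin_mul_sin (j k : ℕ) :
    ∫ θ in 0..π, sin ((j + 1) * θ) * sin ((k + 1) * θ) = if j = k then π / 2 else 0 := by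
  have hprod : ∀ θ, sin ((j + 1) * θ) * sin ((k + 1) * θ)
      = cos (((j - k : ℤ) : ℝ) * θ) / 2 - cos (((j + k + 2 : ℤ) : ℝ) * θ) / 2 := fun θ => by
    push_cast
    rw [show ((j : ℝ) - k) * θ = (j + 1) * θ - (k + 1) * θ by ring,
      show ((j : ℝ) + k + 2) * θ = (j + 1) * θ + (k + 1) * θ by ring, cos_sub, cos_add]
    ring
  simp_rw [hprod]
  rw [intervalIntegral.integral_sub (Continuous.intervalIntegrable (by fun_prop) _ _)
      (Continuous.intervalIntegrable (by fun_prop) _ _),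
    intervalIntegral.integral_div, intervalIntegral.integral_div,
    integral_cos_int_mul_eq_zero (m := j + k + 2) (by omega), zero_div, sub_zero]
  split_ifs with h
  · simp [h]
  · rw [integral_cos_int_mul_eq_zero (by omega), zero_div]

theorem integral_sq_sum_mul_sin (s : Finset ℕ) (β : ℕ → ℝ) :
    ∫ θ in 0..π, (∑ k ∈ s, β k * sin ((k + 1) * θ)) ^ 2 = π / 2 * ∑ k ∈ s, β k ^ 2 := by
  have hterm : ∀ j k : ℕ, ∫ θ in 0..π, β j * sin ((j + 1) * θ) * (β k * sin ((k + 1) * θ))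
      = β j * β k * if j = k then π / 2 else 0 := fun j k => by
    rw [← integral_sin_mul_sin, ← intervalIntegral.integral_const_mul]
    congr 1 with θ
    ring
  have hrow : ∀ j, ∫ θ in 0..π, ∑ k ∈ s, β j * sin ((j + 1) * θ) * (β k * sin ((k + 1) * θ))
      = ∑ k ∈ s, β j * β k * if j = k then π / 2 else 0 := fun j => by
    rw [intervalIntegral.integral_finsetSum
      fun _ _ => Continuous.intervalIntegrable (by fun_prop) _ _]
    exact sum_congr rfl fun k _ => hterm j k
  simp_rw [sq, sum_mul_sum]
  rw [intervalIntegral.integral_finsetSum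
    fun _ _ => Continuous.intervalIntegrable (by fun_prop) _ _]
  simp_rw [hrow, mul_ite, mul_zero, sum_ite_eq, mul_sum]
  exact sum_congr rfl fun k hk => by rw [if_pos hk]; ring

theorem integral_comp_cos_mul_sin {g : ℝ → ℝ} (hg : Continuous g) :
    ∫ θ in 0..π, g (cos θ) * sin θ = ∫ x in -1..1, g x := by
  have h := intervalIntegral.integral_comp_mul_deriv (a := 0) (b := π)
    (fun θ _ => hasDerivAt_cos θ) (by fun_prop) hg
  rw [cos_zero, cos_pi, intervalIntegral.integral_symm (-1) 1] at h
  simpa only [Function.comp_def, mul_neg, intervalIntegral.integral_neg, neg_inj] using h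

theorem integral_sq_comp_cos_mul_sin_le {f : ℝ → ℝ} (hf : Continuous f) :
    ∫ θ in 0..π, (f (cos θ) * sin θ) ^ 2 ≤ ∫ x in -1..1, f x ^ 2 := by
  rw [← integral_comp_cos_mul_sin (g := fun x => f x ^ 2) (by fun_prop)]
  refine intervalIntegral.integral_mono_on pi_pos.le
    (Continuous.intervalIntegrable (by fun_prop) _ _)
    (Continuous.intervalIntegrable (by fun_prop) _ _) fun θ hθ => ?_
  have hsin : 0 ≤ sin θ := sin_nonneg_of_nonneg_of_le_pi hθ.1 hθ.2
  rw [mul_pow]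
  exact mul_le_mul_of_nonneg_left (pow_le_of_le_one hsin (sin_le_one θ) two_ne_zero) (sq_nonneg _)

theorem pi_div_two_mul_sum_sq_le_integral_sq {P : ℝ[X]} {s : Finset ℕ} {β : ℕ → ℝ}
    (hP : P = ∑ k ∈ s, β k • U ℝ k) :
    π / 2 * ∑ k ∈ s, β k ^ 2 ≤ ∫ x in -1..1, P.eval x ^ 2 := by
  have hsin : ∀ θ, P.eval (cos θ) * sin θ = ∑ k ∈ s, β k * sin ((k + 1) * θ) := fun θ => by
    simp_rw [hP, eval_finsetSum, sum_mul, eval_smul, smul_eq_mul, mul_assoc, U_real_cos,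
      Int.cast_natCast]
  calc π / 2 * ∑ k ∈ s, β k ^ 2 = ∫ θ in 0..π, (P.eval (cos θ) * sin θ) ^ 2 := by
        simp_rw [hsin, integral_sq_sum_mul_sin]
    _ ≤ ∫ x in -1..1, P.eval x ^ 2 := integral_sq_comp_cos_mul_sin_le P.continuous

theorem abs_eval_le_sqrt_integral_sq {P : ℝ[X]} {n : ℕ} (hP : P.natDegree ≤ n) {x : ℝ}
    (hx : |x| ≤ 1) :
    |P.eval x| ≤ (n + 1) ^ 2 * √(2 / π * ∫ x in -1..1, P.eval x ^ 2) := by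
  obtain ⟨β, hβ, -⟩ := exists_eq_sum_smul_U n P hP
  set S := ∑ k ∈ range (n + 1), β k ^ 2
  have hS : S ≤ 2 / π * ∫ x in -1..1, P.eval x ^ 2 := by
    have := pi_div_two_mul_sum_sq_le_integral_sq hβ
    rw [div_mul_eq_mul_div, le_div_iff₀ pi_pos]
    linarith
  have hcoeff : ∀ k ∈ range (n + 1), |β k| ≤ √S := fun k hk =>
    abs_le_sqrt (single_le_sum (fun j _ => sq_nonneg (β j)) hk)
  have hU : ∀ k ∈ range (n + 1), |(U ℝ k).eval x| ≤ n + 1 := fun k hk => by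
    have hk : (k : ℝ) ≤ n := by exact_mod_cast Nat.lt_succ_iff.1 (mem_range.1 hk)
    linarith [abs_eval_U_real_le hx k]
  calc |P.eval x| ≤ ∑ k ∈ range (n + 1), |β k| * |(U ℝ k).eval x| := by
        simp_rw [hβ, eval_finsetSum, eval_smul, smul_eq_mul, ← abs_mul]
        exact abs_sum_le_sum_abs _ _
    _ ≤ ∑ k ∈ range (n + 1), √S * (n + 1) := sum_le_sum fun k hk =>
        mul_le_mul (hcoeff k hk) (hU k hk) (abs_nonneg _) (sqrt_nonneg _)
    _ = (n + 1) ^ 2 * √S := by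
        rw [sum_const, card_range, nsmul_eq_mul, Nat.cast_succ]
        ring
    _ ≤ (n + 1) ^ 2 * √(2 / π * ∫ x in -1..1, P.eval x ^ 2) := by gcongr

theorem pi_div_two_mul_sq_coeff_le_integral_sq {P : ℝ[X]} {n : ℕ} (hP : P.natDegree ≤ n) :
    π / 2 * (P.coeff n / 2 ^ n) ^ 2 ≤ ∫ x in -1..1, P.eval x ^ 2 := by
  obtain ⟨β, hβ, hn⟩ := exists_eq_sum_smul_U n P hP
  rw [hn, mul_div_cancel_left₀ _ (by positivity)]
  calc π / 2 * β n ^ 2 ≤ π / 2 * ∑ k ∈ range (n + 1), β k ^ 2 := by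
        gcongr
        exact single_le_sum (fun j _ => sq_nonneg (β j)) (self_mem_range_succ n)
    _ ≤ ∫ x in -1..1, P.eval x ^ 2 := pi_div_two_mul_sum_sq_le_integral_sq hβ

noncomputable def compAffineIcc (α β : ℝ) (P : ℝ[X]) : ℝ[X] :=
  P.comp (C ((β - α) / 2) * X + C ((α + β) / 2))

section compAffineIcc

variable {α β : ℝ} {P : ℝ[X]}

theorem eval_compAffineIcc (u : ℝ) :
    (compAffineIcc α β P).eval u = P.eval ((β - α) / 2 * u + (α + β) / 2) := by
  simp [compAffineIcc]

theorem natDegree_compAffineIcc (h : α ≠ β) : (compAffineIcc α β P).natDegree = P.natDegree := by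
  rw [compAffineIcc, natDegree_comp,
    natDegree_linear (div_ne_zero (sub_ne_zero.2 h.symm) two_ne_zero), mul_one]

theorem Polynomial.Monic.leadingCoeff_compAffineIcc (hP : P.Monic) (h : α ≠ β) :
    (compAffineIcc α β P).leadingCoeff = ((β - α) / 2) ^ P.natDegree := by
  have he : (β - α) / 2 ≠ 0 := div_ne_zero (sub_ne_zero.2 h.symm) two_ne_zero
  rw [compAffineIcc, leadingCoeff_comp (by rw [natDegree_linear he]; norm_num), hP.leadingCoeff,
    leadingCoeff_linear he, one_mul]

theorem integral_sq_eval_compAffineIcc (h : α ≠ β) :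
    ∫ u in -1..1, (compAffineIcc α β P).eval u ^ 2 = 2 / (β - α) * ∫ x in α..β, P.eval x ^ 2 := by
  simp_rw [eval_compAffineIcc]
  rw [intervalIntegral.integral_comp_mul_add (fun x => P.eval x ^ 2)
    (div_ne_zero (sub_ne_zero.2 h.symm) two_ne_zero), smul_eq_mul, inv_div]
  congr 2 <;> ring

end compAffineIcc

theorem abs_eval_le_sqrt_integral_sq_of_mem_Icc {α β : ℝ} (hαβ : α < β) {P : ℝ[X]} {n : ℕ}
    (hP : P.natDegree ≤ n) {x : ℝ} (hx : x ∈ Icc α β) :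
    |P.eval x| ≤ (n + 1) ^ 2 * √(4 / (π * (β - α)) * ∫ x in α..β, P.eval x ^ 2) := by
  have he : 0 < (β - α) / 2 := half_pos (sub_pos.2 hαβ)
  have hu : |(x - (α + β) / 2) / ((β - α) / 2)| ≤ 1 := by
    rw [abs_div, abs_of_pos he, div_le_one he, abs_le]
    constructor <;> linarith [hx.1, hx.2]
  have := abs_eval_le_sqrt_integral_sq ((natDegree_compAffineIcc hαβ.ne).trans_le hP) hu
  rw [eval_compAffineIcc, mul_div_cancel₀ _ he.ne', sub_add_cancel,
    integral_sq_eval_compAffineIcc hαβ.ne, ← mul_assoc, div_mul_div_comm] at this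
  convert this using 4
  norm_num

theorem Polynomial.Monic.integral_sq_ge {α β : ℝ} (hαβ : α < β) {P : ℝ[X]} (hP : P.Monic) :
    π * (β - α) / 4 * ((β - α) / 4) ^ (2 * P.natDegree) ≤ ∫ x in α..β, P.eval x ^ 2 := by
  have hlen : 0 < β - α := sub_pos.2 hαβ
  have := pi_div_two_mul_sq_coeff_le_integral_sq (natDegree_compAffineIcc (P := P) hαβ.ne).le
  rw [← natDegree_compAffineIcc (P := P) hαβ.ne, Polynomial.coeff_natDegree,
    hP.leadingCoeff_compAffineIcc hαβ.ne, integral_sq_eval_compAffineIcc hαβ.ne,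
    natDegree_compAffineIcc hαβ.ne] at this
  calc π * (β - α) / 4 * ((β - α) / 4) ^ (2 * P.natDegree)
      = (β - α) / 2 * (π / 2 * (((β - α) / 2) ^ P.natDegree / 2 ^ P.natDegree) ^ 2) := by
        rw [← div_pow, pow_mul']
        ring
    _ ≤ (β - α) / 2 * (2 / (β - α) * ∫ x in α..β, P.eval x ^ 2) := by gcongr
    _ = ∫ x in α..β, P.eval x ^ 2 := by field_simp

section UnionOfIntervals

variable {L : ℕ} {a b : ℕ → ℝ} {P : ℝ[X]}

theorem supK_nonneg (P : ℝ[X]) : 0 ≤ supK L a b P :=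
  Real.sSup_nonneg (forall_mem_image.2 fun _ _ => abs_nonneg _)

theorem abs_eval_le_supK (P : ℝ[X]) {ℓ : ℕ} (hℓ : ℓ < L) {x : ℝ} (hx : x ∈ Icc (a ℓ) (b ℓ)) :
    |P.eval x| ≤ supK L a b P := by
  have hK : IsCompact (⋃ ℓ ∈ range L, Icc (a ℓ) (b ℓ)) :=
    (range L).isCompact_biUnion fun _ _ => isCompact_Icc
  exact le_csSup (hK.image P.continuous.abs).bddAbove
    (mem_image_of_mem _ (mem_iUnion₂.2 ⟨ℓ, mem_range.2 hℓ, hx⟩))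

theorem supK_le {M : ℝ} (hM : 0 ≤ M) (h : ∀ ℓ < L, ∀ x ∈ Icc (a ℓ) (b ℓ), |P.eval x| ≤ M) :
    supK L a b P ≤ M := by
  refine Real.sSup_le (forall_mem_image.2 fun x hx => ?_) hM
  obtain ⟨ℓ, hℓ, hx⟩ := mem_iUnion₂.1 hx
  exact h ℓ (mem_range.1 hℓ) x hx

theorem sqrt_integral_sq_le_L2K (hab : ∀ ℓ < L, a ℓ ≤ b ℓ) {ℓ : ℕ} (hℓ : ℓ < L) :
    √(∫ x in a ℓ..b ℓ, P.eval x ^ 2) ≤ L2K L a b P :=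
  sqrt_le_sqrt <| single_le_sum (f := fun j => ∫ x in a j..b j, P.eval x ^ 2)
    (fun j hj => intervalIntegral.integral_nonneg (hab j (mem_range.1 hj)) fun _ _ => sq_nonneg _)
    (mem_range.2 hℓ)

theorem L2K_le_sqrt_mul_supK (hab : ∀ ℓ < L, a ℓ ≤ b ℓ) (P : ℝ[X]) :
    L2K L a b P ≤ √(∑ ℓ ∈ range L, (b ℓ - a ℓ)) * supK L a b P := by
  have hterm : ∀ ℓ ∈ range L, ∫ x in a ℓ..b ℓ, P.eval x ^ 2 ≤ (b ℓ - a ℓ) * supK L a b P ^ 2 :=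
    fun ℓ hℓ => by
      simpa using intervalIntegral.integral_mono_on (μ := volume) (f := fun x => P.eval x ^ 2)
        (hab ℓ (mem_range.1 hℓ)) (Continuous.intervalIntegrable (by fun_prop) _ _)
        intervalIntegrable_const fun x hx => by
          rw [← sq_abs]
          exact pow_le_pow_left₀ (abs_nonneg _) (abs_eval_le_supK P (mem_range.1 hℓ) hx) 2
  calc L2K L a b P ≤ √((∑ ℓ ∈ range L, (b ℓ - a ℓ)) * supK L a b P ^ 2) := by
        rw [sum_mul]
        exact sqrt_le_sqrt (sum_le_sum hterm)
    _ = √(∑ ℓ ∈ range L, (b ℓ - a ℓ)) * supK L a b P := by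
        rw [sqrt_mul' _ (sq_nonneg _), sqrt_sq (supK_nonneg P)]

theorem supK_le_mul_L2K (hab : ∀ ℓ < L, a ℓ < b ℓ) {n : ℕ} (hP : P.natDegree ≤ n) :
    supK L a b P
      ≤ (n + 1) ^ 2 * (∑ ℓ ∈ range L, √(4 / (π * (b ℓ - a ℓ)))) * L2K L a b P := by
  refine supK_le (mul_nonneg (by positivity) (sqrt_nonneg _)) fun ℓ hℓ x hx => ?_
  have hsingle : √(4 / (π * (b ℓ - a ℓ))) ≤ ∑ j ∈ range L, √(4 / (π * (b j - a j))) :=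
    single_le_sum (f := fun j => √(4 / (π * (b j - a j)))) (fun _ _ => sqrt_nonneg _)
      (mem_range.2 hℓ)
  have hlen : 0 < b ℓ - a ℓ := sub_pos.2 (hab ℓ hℓ)
  calc |P.eval x|
      ≤ (n + 1) ^ 2 * (√(4 / (π * (b ℓ - a ℓ))) * √(∫ x in a ℓ..b ℓ, P.eval x ^ 2)) := by
        rw [← sqrt_mul (by positivity)]
        exact abs_eval_le_sqrt_integral_sq_of_mem_Icc (hab ℓ hℓ) hP hx
    _ ≤ (n + 1) ^ 2 * ((∑ j ∈ range L, √(4 / (π * (b j - a j)))) * L2K L a b P) := by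
        gcongr
        exact sqrt_integral_sq_le_L2K (fun j hj => (hab j hj).le) hℓ
    _ = _ := by ring

theorem Polynomial.Monic.sqrt_le_L2K (hab : ∀ ℓ < L, a ℓ < b ℓ) (hL : 0 < L) (hP : P.Monic) :
    √(π * (b 0 - a 0) / 4 * ((b 0 - a 0) / 4) ^ (2 * P.natDegree)) ≤ L2K L a b P :=
  (sqrt_le_sqrt (hP.integral_sq_ge (hab 0 hL))).trans
    (sqrt_integral_sq_le_L2K (fun j hj => (hab j hj).le) hL)

end UnionOfIntervals

def monicOfDegree (n : ℕ) : Set ℝ[X] := {P | P.Monic ∧ P.natDegree = n}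

theorem setOf_exists_monic_natDegree_eq (F : ℝ[X] → ℝ) (n : ℕ) :
    {r : ℝ | ∃ P : ℝ[X], P.Monic ∧ P.natDegree = n ∧ r = F P} = F '' monicOfDegree n := by
  ext r
  simp only [monicOfDegree, mem_ofPred_eq, mem_image, and_assoc, eq_comm]

theorem monicOfDegree_nonempty (n : ℕ) : (monicOfDegree n).Nonempty :=
  ⟨X ^ n, monic_X_pow n, natDegree_X_pow n⟩

theorem csInf_image_le_mul_csInf {ι : Type*} {S : Set ι} {f g : ι → ℝ} {c : ℝ} (hS : S.Nonempty)
    (hf : ∀ i ∈ S, 0 ≤ f i) (hc : 0 < c) (h : ∀ i ∈ S, f i ≤ c * g i) :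
    sInf (f '' S) ≤ c * sInf (g '' S) := by
  rw [← div_le_iff₀' hc]
  refine le_csInf (hS.image g) (forall_mem_image.2 fun i hi => ?_)
  rw [div_le_iff₀' hc]
  exact (csInf_le ⟨0, forall_mem_image.2 hf⟩ (mem_image_of_mem f hi)).trans (h i hi)

section ChebyshevNumbers

variable {L : ℕ} {a b : ℕ → ℝ}

theorem sInf_L2K_pos (hab : ∀ ℓ < L, a ℓ < b ℓ) (hL : 0 < L) (n : ℕ) :
    0 < sInf (L2K L a b '' monicOfDegree n) := by
  have hlen : 0 < b 0 - a 0 := sub_pos.2 (hab 0 hL)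
  refine lt_of_lt_of_le ?_ (le_csInf ((monicOfDegree_nonempty n).image _)
    (forall_mem_image.2 fun P hP => hP.2 ▸ hP.1.sqrt_le_L2K hab hL))
  positivity

theorem sInf_L2K_le_mul_sInf_supK (hab : ∀ ℓ < L, a ℓ < b ℓ) (hL : 0 < L) (n : ℕ) :
    sInf (L2K L a b '' monicOfDegree n)
      ≤ √(∑ ℓ ∈ range L, (b ℓ - a ℓ)) * sInf (supK L a b '' monicOfDegree n) := by
  have hlen : 0 < ∑ ℓ ∈ range L, (b ℓ - a ℓ) :=
    sum_pos (fun ℓ hℓ => sub_pos.2 (hab ℓ (mem_range.1 hℓ))) (nonempty_range_iff.2 hL.ne')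
  exact csInf_image_le_mul_csInf (monicOfDegree_nonempty n) (fun P _ => sqrt_nonneg _)
    (sqrt_pos.2 hlen) fun P _ => L2K_le_sqrt_mul_supK (fun ℓ hℓ => (hab ℓ hℓ).le) P

theorem sInf_supK_le_mul_sInf_L2K (hab : ∀ ℓ < L, a ℓ < b ℓ) (hL : 0 < L) (n : ℕ) :
    sInf (supK L a b '' monicOfDegree n)
      ≤ (n + 1) ^ 2 * (∑ ℓ ∈ range L, √(4 / (π * (b ℓ - a ℓ))))
        * sInf (L2K L a b '' monicOfDegree n) := by
  have hE : 0 < ∑ ℓ ∈ range L, √(4 / (π * (b ℓ - a ℓ))) :=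
    sum_pos (fun ℓ hℓ => sqrt_pos.2 (div_pos four_pos (mul_pos pi_pos
      (sub_pos.2 (hab ℓ (mem_range.1 hℓ)))))) (nonempty_range_iff.2 hL.ne')
  exact csInf_image_le_mul_csInf (monicOfDegree_nonempty n) (fun P _ => supK_nonneg P)
    (mul_pos (by positivity) hE) fun P hP => supK_le_mul_L2K hab hP.2.le

end ChebyshevNumbers

theorem tendsto_rpow_one_div_of_le_of_le {x : ℕ → ℝ} {A B : ℝ} (k : ℕ) (hA : 0 < A)
    (hlow : ∀ n : ℕ, A / ((n : ℝ) + 1) ^ k ≤ x n) (hup : ∀ n, x n ≤ B) :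
    Tendsto (fun n : ℕ => x n ^ (1 / (n : ℝ))) atTop (𝓝 1) := by
  have hconst : ∀ {c : ℝ}, 0 < c → Tendsto (fun n : ℕ => c ^ (1 / (n : ℝ))) atTop (𝓝 1) :=
    fun hc => by
      simpa using tendsto_const_nhds.rpow tendsto_one_div_atTop_nhds_zero_nat (Or.inl hc.ne')
  have hroot : Tendsto (fun n : ℕ => ((n : ℝ) + 1) ^ (1 / (n : ℝ))) atTop (𝓝 1) :=
    ((tendsto_rpow_div_mul_add 1 1 (-1) zero_ne_one).comp
      (tendsto_atTop_add_const_right atTop 1 tendsto_natCast_atTop_atTop)).congr fun n => by simp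
  have hlow' : Tendsto (fun n : ℕ => (A / ((n : ℝ) + 1) ^ k) ^ (1 / (n : ℝ))) atTop (𝓝 1) := by
    have := (hconst hA).div (hroot.pow k) (by simp)
    rw [one_pow, div_one] at this
    refine this.congr fun n => ?_
    rw [Pi.div_apply, div_rpow hA.le (by positivity), ← rpow_natCast, ← rpow_natCast,
      ← rpow_mul (by positivity), ← rpow_mul (by positivity), mul_comm]
  have hB : 0 < B := hA.trans_le (by simpa using (hlow 0).trans (hup 0))
  have hx : ∀ n, 0 ≤ x n := fun n => (by positivity : 0 ≤ A / ((n : ℝ) + 1) ^ k).trans (hlow n)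
  exact tendsto_of_tendsto_of_tendsto_of_le_of_le hlow' (hconst hB)
    (fun n => rpow_le_rpow (by positivity) (hlow n) (by positivity))
    (fun n => rpow_le_rpow (hx n) (hup n) (by positivity))

theorem tendsto_rpow_div_rpow_of_le_mul {s t : ℕ → ℝ} {D E : ℝ} (hs : ∀ n, 0 < s n)
    (ht : ∀ n, 0 < t n) (hst : ∀ n, s n ≤ D * t n)
    (hts : ∀ n : ℕ, t n ≤ ((n : ℝ) + 1) ^ 2 * E * s n) :
    Tendsto (fun n : ℕ => s n ^ (1 / (n : ℝ)) / t n ^ (1 / (n : ℝ))) atTop (𝓝 1) := by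
  have hE : 0 < E := by
    have := (ht 0).trans_le (hts 0)
    rw [Nat.cast_zero, zero_add, one_pow, one_mul] at this
    exact pos_of_mul_pos_left this (hs 0).le
  refine (tendsto_rpow_one_div_of_le_of_le (B := D) 2 (inv_pos.2 hE) (fun n => ?_)
    (fun n => (div_le_iff₀ (ht n)).2 (hst n))).congr fun n => div_rpow (hs n).le (ht n).le _
  rw [div_eq_mul_inv, ← mul_inv_rev, le_div_iff₀ (ht n), inv_mul_le_iff₀ (by positivity)]
  exact hts n

theorem L2_and_sup_chebyshev_numbers_same_root_asymptotics_general
    (L : ℕ) (hL : 0 < L) (a b : ℕ → ℝ)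
    (hab : ∀ ℓ < L, a ℓ < b ℓ)
    (t s : ℕ → ℝ)
    (ht : ∀ n, t n = sInf { r : ℝ | ∃ P : Polynomial ℝ, P.Monic ∧ P.natDegree = n ∧
        r = supK L a b P })
    (hs : ∀ n, s n = sInf { r : ℝ | ∃ P : Polynomial ℝ, P.Monic ∧ P.natDegree = n ∧
        r = L2K L a b P }) :
    Tendsto (fun n => s n ^ (1 / (n : ℝ)) / t n ^ (1 / (n : ℝ))) atTop (nhds 1) ∧
    ∀ c : ℝ, Tendsto (fun n => t n ^ (1 / (n : ℝ))) atTop (nhds c) →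
      Tendsto (fun n => s n ^ (1 / (n : ℝ))) atTop (nhds c) := by
  simp only [setOf_exists_monic_natDegree_eq] at ht hs
  have hs_pos : ∀ n, 0 < s n := fun n => hs n ▸ sInf_L2K_pos hab hL n
  have hst : ∀ n, s n ≤ √(∑ ℓ ∈ range L, (b ℓ - a ℓ)) * t n := fun n =>
    hs n ▸ ht n ▸ sInf_L2K_le_mul_sInf_supK hab hL n
  have ht_pos : ∀ n, 0 < t n := fun n =>
    pos_of_mul_pos_right ((hs_pos n).trans_le (hst n)) (sqrt_nonneg _)
  have hts : ∀ n : ℕ, t n ≤ ((n : ℝ) + 1) ^ 2 * (∑ ℓ ∈ range L, √(4 / (π * (b ℓ - a ℓ)))) * s n :=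
    fun n => hs n ▸ ht n ▸ sInf_supK_le_mul_sInf_L2K hab hL n
  have hratio := tendsto_rpow_div_rpow_of_le_mul hs_pos ht_pos hst hts
  refine ⟨hratio, fun c hc => ?_⟩
  simpa using (hratio.mul hc).congr fun n => div_mul_cancel₀ _ (rpow_pos_of_pos (ht_pos n) _).ne'

/-- With `t N` the minimal sup norm and `s N` the minimal `L2` norm on `K` over monic
polynomials of degree `N`, one has `s_N^{1/N} / t_N^{1/N} → 1`; in particular if
`t_N^{1/N} → c` then also `s_N^{1/N} → c`. -/
theorem L2_and_sup_chebyshev_numbers_same_root_asymptotics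
    (L : ℕ) (hL : 0 < L) (a b : ℕ → ℝ)
    (ha0 : a 0 = -1) (hbL : b (L - 1) = 1)
    (hab : ∀ ℓ < L, a ℓ < b ℓ)
    (hgap : ∀ ℓ, ℓ + 1 < L → b ℓ < a (ℓ + 1))
    (t s : ℕ → ℝ)
    (ht : ∀ n, t n = sInf { r : ℝ | ∃ P : Polynomial ℝ, P.Monic ∧ P.natDegree = n ∧
        r = supK L a b P })
    (hs : ∀ n, s n = sInf { r : ℝ | ∃ P : Polynomial ℝ, P.Monic ∧ P.natDegree = n ∧
        r = L2K L a b P }) :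
    Tendsto (fun n => s n ^ (1 / (n : ℝ)) / t n ^ (1 / (n : ℝ))) atTop (nhds 1) ∧
    ∀ c : ℝ, Tendsto (fun n => t n ^ (1 / (n : ℝ))) atTop (nhds c) →
      Tendsto (fun n => s n ^ (1 / (n : ℝ))) atTop (nhds c) :=
  L2_and_sup_chebyshev_numbers_same_root_asymptotics_general L hL a b hab t s ht hs
end

section
/- Let 0 < c < 1 and K = [−1, −c] ∪ [c, 1]. For d ∈ ℝ, consider the monic linear polynomial P_d(x) = x − d and its L1 norm ‖P_d‖_{L1(K)} := ∫_{−1}^{−c} |t − d| dt + ∫_{c}^{1} |t − d| dt. Then P_d minimizes ‖·‖_{L1(K)} among all monic polynomials of degree 1 if and only if d ∈ [−c, c]; in particular the set of monic degree-1 minimizers of the L1 norm on K is exactly { x − d : d ∈ [−c, c] }. -/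
/-!
Since `|t - d| ≥ d - t` on `[-1, -c]` and `|t - d| ≥ t - d` on `[c, 1]`, the `L1` norm of `x - d`
on `K` is at least `∫_{-1}^{-c} (d - t) dt + ∫_c^1 (t - d) dt = 1 - c ^ 2`, a bound that does not
depend on `d`. The integrands being continuous, the bound is attained exactly when `x - d` does not
change sign on either interval, that is, when `d ∈ [-c, c]`.
-/

open Polynomial MeasureTheory Set intervalIntegral

theorem intervalIntegral.integral_le_integral_abs {f : ℝ → ℝ} {a b : ℝ} (hab : a ≤ b) :
    ∫ t in a..b, f t ≤ ∫ t in a..b, |f t| :=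
  (le_abs_self _).trans (abs_integral_le_integral_abs hab)

theorem intervalIntegral.integral_eq_integral_abs_iff {f : ℝ → ℝ} {a b : ℝ} (hab : a < b)
    (hf : ContinuousOn f (Icc a b)) :
    ∫ t in a..b, f t = ∫ t in a..b, |f t| ↔ ∀ t ∈ Icc a b, 0 ≤ f t := by
  refine ⟨fun h => ?_, fun h => integral_congr fun t ht => ?_⟩
  · by_contra! ⟨t, ht, hneg⟩
    refine (integral_lt_integral_of_continuousOn_of_le_of_exists_lt hab hf hf.abs
      (fun x _ => le_abs_self (f x)) ⟨t, ht, ?_⟩).ne h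
    rw [abs_of_neg hneg]
    linarith
  · rw [uIcc_of_le hab.le] at ht
    exact (abs_of_nonneg (h t ht)).symm

theorem Polynomial.Monic.exists_eq_X_sub_C_of_natDegree_eq_one {R : Type*} [CommRing R]
    {p : R[X]} (hp : p.Monic) (h : p.natDegree = 1) : ∃ d, p = X - C d :=
  ⟨-p.coeff 0, by rw [C_neg, sub_neg_eq_add, ← hp.eq_X_add_C h]⟩

theorem Polynomial.forall_monic_natDegree_eq_one_iff {R : Type*} [CommRing R] [Nontrivial R]
    {P : R[X] → Prop} : (∀ p : R[X], p.Monic → p.natDegree = 1 → P p) ↔ ∀ d, P (X - C d) := by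
  refine ⟨fun h d => h _ (monic_X_sub_C d) (natDegree_X_sub_C d), fun h p hp hp1 => ?_⟩
  obtain ⟨d, rfl⟩ := hp.exists_eq_X_sub_C_of_natDegree_eq_one hp1
  exact h d

noncomputable def twoIntervalL1 (c d : ℝ) : ℝ :=
  (∫ t in (-1 : ℝ)..(-c), |t - d|) + ∫ t in c..(1 : ℝ), |t - d|

section twoIntervalL1

variable {c : ℝ}

theorem integral_sub_add_integral_sub (c d : ℝ) :
    (∫ t in (-1 : ℝ)..(-c), (d - t)) + ∫ t in c..(1 : ℝ), (t - d) = 1 - c ^ 2 := by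
  rw [integral_sub intervalIntegrable_const intervalIntegrable_id,
    integral_sub intervalIntegrable_id intervalIntegrable_const]
  simp only [integral_id, intervalIntegral.integral_const, smul_eq_mul]
  ring

theorem twoIntervalL1_eq (c d : ℝ) :
    twoIntervalL1 c d = (∫ t in (-1 : ℝ)..(-c), |d - t|) + ∫ t in c..(1 : ℝ), |t - d| := by
  rw [twoIntervalL1, integral_congr fun t _ => abs_sub_comm t d]

theorem one_sub_sq_le_twoIntervalL1 (hc : c ≤ 1) (d : ℝ) : 1 - c ^ 2 ≤ twoIntervalL1 c d := by
  rw [← integral_sub_add_integral_sub c d, twoIntervalL1_eq]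
  gcongr <;> exact integral_le_integral_abs (by linarith)

theorem twoIntervalL1_eq_iff (hc : c < 1) (d : ℝ) :
    twoIntervalL1 c d = 1 - c ^ 2 ↔ d ∈ Icc (-c) c := by
  have hleft : -1 < -c := neg_lt_neg hc
  rw [← integral_sub_add_integral_sub c d, twoIntervalL1_eq, eq_comm,
    add_eq_add_iff_eq_and_eq (integral_le_integral_abs hleft.le) (integral_le_integral_abs hc.le),
    integral_eq_integral_abs_iff hleft (by fun_prop), integral_eq_integral_abs_iff hc (by fun_prop)]
  constructor
  · rintro ⟨hl, hr⟩
    exact ⟨by linarith [hl (-c) ⟨hleft.le, le_rfl⟩], by linarith [hr c ⟨le_rfl, hc.le⟩]⟩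
  · rintro ⟨hl, hr⟩
    exact ⟨fun t ht => by linarith [ht.2], fun t ht => by linarith [ht.1]⟩

theorem forall_twoIntervalL1_le_iff (hc0 : 0 ≤ c) (hc1 : c < 1) (d : ℝ) :
    (∀ e, twoIntervalL1 c d ≤ twoIntervalL1 c e) ↔ d ∈ Icc (-c) c := by
  rw [← twoIntervalL1_eq_iff hc1]
  refine ⟨fun h => le_antisymm ?_ (one_sub_sq_le_twoIntervalL1 hc1.le d),
    fun h e => h.trans_le (one_sub_sq_le_twoIntervalL1 hc1.le e)⟩
  exact (h 0).trans_eq ((twoIntervalL1_eq_iff hc1 0).2 ⟨by linarith, hc0⟩)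

end twoIntervalL1

/-- For `K = [−1,−c] ∪ [c,1]` with `0 < c < 1`, the monic linear polynomial `x − d`
minimizes the `L1` norm on `K` among monic polynomials of degree 1 iff `d ∈ [−c,c]`;
the set of monic degree-1 minimizers is exactly `{x − d : d ∈ [−c,c]}`. -/
theorem linear_L1_minimizers_two_intervals (c : ℝ) (hc0 : 0 < c) (hc1 : c < 1) :
    (∀ d : ℝ,
      ((∀ Q : Polynomial ℝ, Q.Monic → Q.natDegree = 1 →
        (∫ t in (-1 : ℝ)..(-c), |t - d|) + (∫ t in c..(1 : ℝ), |t - d|) ≤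
          (∫ t in (-1 : ℝ)..(-c), |Q.eval t|) + (∫ t in c..(1 : ℝ), |Q.eval t|)) ↔
      d ∈ Set.Icc (-c) c)) ∧
    { Q : Polynomial ℝ | Q.Monic ∧ Q.natDegree = 1 ∧
        ∀ R : Polynomial ℝ, R.Monic → R.natDegree = 1 →
          (∫ t in (-1 : ℝ)..(-c), |Q.eval t|) + (∫ t in c..(1 : ℝ), |Q.eval t|) ≤
            (∫ t in (-1 : ℝ)..(-c), |R.eval t|) + (∫ t in c..(1 : ℝ), |R.eval t|) }
      = (fun d => Polynomial.X - Polynomial.C d) '' Set.Icc (-c) c := by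
  have hF (e : ℝ) : (∫ t in (-1 : ℝ)..(-c), |(X - C e).eval t|) +
      (∫ t in c..(1 : ℝ), |(X - C e).eval t|) = twoIntervalL1 c e := by
    simp [twoIntervalL1]
  refine ⟨fun d => ?_, ?_⟩
  · simp only [forall_monic_natDegree_eq_one_iff, hF]
    exact forall_twoIntervalL1_le_iff hc0.le hc1 d
  · ext Q
    simp only [mem_ofPred_eq, mem_image, forall_monic_natDegree_eq_one_iff, hF]
    constructor
    · rintro ⟨hQ, hQ1, hmin⟩
      obtain ⟨d, rfl⟩ := hQ.exists_eq_X_sub_C_of_natDegree_eq_one hQ1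
      exact ⟨d, (forall_twoIntervalL1_le_iff hc0.le hc1 d).1 (by simpa only [hF] using hmin), rfl⟩
    · rintro ⟨d, hd, rfl⟩
      exact ⟨monic_X_sub_C d, natDegree_X_sub_C d,
        by simpa only [hF] using (forall_twoIntervalL1_le_iff hc0.le hc1 d).2 hd⟩
end
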